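/- arXiv:2309.17064 — 9 statements merged into one kernel-verified Lean document; each statement's English description precedes it below -/
import Mathlib

section
/- Let f : [0,1) → [0,∞) be C², with f⁻¹(0) = {0}, such that s ↦ (1-s)f(s) is strictly increasing on (0,1) with limit σ_c > 0 as s → 1⁻, and such that s ↦ (1-s)f'(s)/f(s) is strictly decreasing on (0,1). Then lim_{s→1⁻} (1-s)² f'(s) = σ_c. -/
/-!
Write `g s = (1 - s) f s` and `h s = (1 - s) f' s / f s`, so that `(1 - s)² f' s = g s · h s`
and it suffices that `h → 1`; being antitone, `h` tends to `inf h`. Where `h ≤ c` (resp. `h ≥ c`),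
`f s (1 - s) ^ c` is antitone (resp. monotone). If `h s₀ = c < 1`, this bounds `g s` by
`K (1 - s) ^ (1 - c) → 0` for `s > s₀`, against `g` increasing and positive. If `h ≥ b > 1`, it
gives `0 < m ≤ f s (1 - s) ^ b = g s (1 - s) ^ (b - 1) → σ_c · 0`. Hence `inf h = 1`.
-/

open Set Filter Topology

section OneSubRpow

variable {f f' : ℝ → ℝ} {a c : ℝ}

lemma tendsto_one_sub_rpow_nhdsLT_one {p : ℝ} (hp : 0 < p) :
    Tendsto (fun s : ℝ => (1 - s) ^ p) (𝓝[<] 1) (𝓝 0) := by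
  have h : Tendsto (fun s : ℝ => 1 - s) (𝓝[<] 1) (𝓝 0) :=
    tendsto_nhdsWithin_of_tendsto_nhds (by simpa using (continuous_sub_left (1 : ℝ)).tendsto 1)
  simpa [Real.zero_rpow hp.ne'] using h.rpow_const (Or.inr hp.le)

lemma HasDerivAt.mul_one_sub_rpow {x y : ℝ} (hf : HasDerivAt f y x) (hx : x < 1) :
    HasDerivAt (fun s => f s * (1 - s) ^ c)
      ((1 - x) ^ (c - 1) * ((1 - x) * y - c * f x)) x := by
  have hx' : 1 - x ≠ 0 := (sub_pos.2 hx).ne'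
  refine (hf.mul (((hasDerivAt_id x).const_sub 1).rpow_const (Or.inl hx'))).congr_deriv ?_
  rw [id, Real.rpow_sub_one hx']
  field_simp
  ring

lemma antitoneOn_mul_one_sub_rpow (hf : ∀ s ∈ Ico a 1, HasDerivAt f (f' s) s)
    (hb : ∀ s ∈ Ioo a 1, (1 - s) * f' s ≤ c * f s) :
    AntitoneOn (fun s => f s * (1 - s) ^ c) (Ico a 1) := by
  have hd : ∀ s ∈ Ico a 1, HasDerivAt (fun s => f s * (1 - s) ^ c)
      ((1 - s) ^ (c - 1) * ((1 - s) * f' s - c * f s)) s :=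
    fun s hs => (hf s hs).mul_one_sub_rpow hs.2
  refine antitoneOn_of_hasDerivWithinAt_nonpos (convex_Ico a 1)
    (fun s hs => (hd s hs).continuousAt.continuousWithinAt)
    (fun s hs => (hd s (interior_subset hs)).hasDerivWithinAt) fun s hs => ?_
  rw [interior_Ico] at hs
  exact mul_nonpos_of_nonneg_of_nonpos (Real.rpow_nonneg (sub_pos.2 hs.2).le _)
    (sub_nonpos.2 (hb s hs))

lemma monotoneOn_mul_one_sub_rpow (hf : ∀ s ∈ Ico a 1, HasDerivAt f (f' s) s)
    (hb : ∀ s ∈ Ioo a 1, c * f s ≤ (1 - s) * f' s) :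
    MonotoneOn (fun s => f s * (1 - s) ^ c) (Ico a 1) := by
  have hd : ∀ s ∈ Ico a 1, HasDerivAt (fun s => f s * (1 - s) ^ c)
      ((1 - s) ^ (c - 1) * ((1 - s) * f' s - c * f s)) s :=
    fun s hs => (hf s hs).mul_one_sub_rpow hs.2
  refine monotoneOn_of_hasDerivWithinAt_nonneg (convex_Ico a 1)
    (fun s hs => (hd s hs).continuousAt.continuousWithinAt)
    (fun s hs => (hd s (interior_subset hs)).hasDerivWithinAt) fun s hs => ?_
  rw [interior_Ico] at hs
  exact mul_nonneg (Real.rpow_nonneg (sub_pos.2 hs.2).le _) (sub_nonneg.2 (hb s hs))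

end OneSubRpow

section Elasticity

variable {f f' : ℝ → ℝ}

lemma one_le_one_sub_mul_deriv_div (hd : ∀ s ∈ Ioo (0 : ℝ) 1, HasDerivAt f (f' s) s)
    (hpos : ∀ s ∈ Ioo (0 : ℝ) 1, 0 < f s)
    (hg : MonotoneOn (fun s => (1 - s) * f s) (Ioo 0 1))
    (hh : AntitoneOn (fun s => (1 - s) * f' s / f s) (Ioo 0 1))
    {s₀ : ℝ} (hs₀ : s₀ ∈ Ioo 0 1) :
    1 ≤ (1 - s₀) * f' s₀ / f s₀ := by
  by_contra! hc
  set c := (1 - s₀) * f' s₀ / f s₀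
  have hmem : ∀ s ∈ Ico s₀ 1, s ∈ Ioo (0 : ℝ) 1 := fun s hs => ⟨hs₀.1.trans_le hs.1, hs.2⟩
  have hanti : AntitoneOn (fun s => f s * (1 - s) ^ c) (Ico s₀ 1) :=
    antitoneOn_mul_one_sub_rpow (fun s hs => hd s (hmem s hs)) fun s hs =>
      (div_le_iff₀ (hpos s (hmem s (Ioo_subset_Ico_self hs)))).1
        (hh hs₀ (hmem s (Ioo_subset_Ico_self hs)) hs.1.le)
  have hg₀ : (1 - s₀) * f s₀ ≤ 0 := by
    refine ge_of_tendsto (by simpa using (tendsto_one_sub_rpow_nhdsLT_one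
      (sub_pos.2 hc)).const_mul (f s₀ * (1 - s₀) ^ c)) ?_
    filter_upwards [Ioo_mem_nhdsLT hs₀.2] with s hs
    have hs' : 0 < 1 - s := sub_pos.2 hs.2
    calc (1 - s₀) * f s₀ ≤ (1 - s) * f s :=
          hg hs₀ (hmem s (Ioo_subset_Ico_self hs)) hs.1.le
      _ = f s * (1 - s) ^ c * (1 - s) ^ (1 - c) := by
          rw [mul_assoc, ← Real.rpow_add hs', add_sub_cancel, Real.rpow_one, mul_comm]
      _ ≤ f s₀ * (1 - s₀) ^ c * (1 - s) ^ (1 - c) :=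
          mul_le_mul_of_nonneg_right (hanti (left_mem_Ico.2 hs₀.2) (Ioo_subset_Ico_self hs)
            hs.1.le) (Real.rpow_nonneg hs'.le _)
  exact hg₀.not_gt (mul_pos (sub_pos.2 hs₀.2) (hpos s₀ hs₀))

lemma le_one_of_forall_le_one_sub_mul_deriv_div
    (hd : ∀ s ∈ Ioo (0 : ℝ) 1, HasDerivAt f (f' s) s)
    (hpos : ∀ s ∈ Ioo (0 : ℝ) 1, 0 < f s) {σ : ℝ}
    (hg : Tendsto (fun s => (1 - s) * f s) (𝓝[<] 1) (𝓝 σ)) {b : ℝ}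
    (hb : ∀ s ∈ Ioo (0 : ℝ) 1, b ≤ (1 - s) * f' s / f s) : b ≤ 1 := by
  by_contra! hb₁
  have hmem : ∀ s ∈ Ico (1 / 2 : ℝ) 1, s ∈ Ioo (0 : ℝ) 1 :=
    fun s hs => ⟨by linarith [hs.1], hs.2⟩
  have hmono : MonotoneOn (fun s => f s * (1 - s) ^ b) (Ico (1 / 2) 1) :=
    monotoneOn_mul_one_sub_rpow (fun s hs => hd s (hmem s hs)) fun s hs =>
      (le_div_iff₀ (hpos s (hmem s (Ioo_subset_Ico_self hs)))).1
        (hb s (hmem s (Ioo_subset_Ico_self hs)))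
  have hm : f (1 / 2) * (1 - 1 / 2) ^ b ≤ 0 := by
    refine ge_of_tendsto (by simpa using hg.mul (tendsto_one_sub_rpow_nhdsLT_one
      (sub_pos.2 hb₁))) ?_
    filter_upwards [Ioo_mem_nhdsLT (show (1 / 2 : ℝ) < 1 by norm_num)] with s hs
    calc f (1 / 2) * (1 - 1 / 2) ^ b ≤ f s * (1 - s) ^ b :=
          hmono (left_mem_Ico.2 (by norm_num)) (Ioo_subset_Ico_self hs) hs.1.le
      _ = (1 - s) * f s * (1 - s) ^ (b - 1) := by
          rw [Real.rpow_sub_one (sub_pos.2 hs.2).ne']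
          field_simp [(sub_pos.2 hs.2).ne']
  exact hm.not_gt (mul_pos (hpos _ (by norm_num)) (Real.rpow_pos_of_pos (by norm_num) _))

end Elasticity

theorem stmt0_general (f f' : ℝ → ℝ) (σc : ℝ)
    (hf_nonneg : ∀ s ∈ Ico (0:ℝ) 1, 0 ≤ f s)
    (hf_zero : ∀ s ∈ Ico (0:ℝ) 1, (f s = 0 ↔ s = 0))
    (hd1 : ∀ s ∈ Ioo (0:ℝ) 1, HasDerivAt f (f' s) s)
    (hf3 : StrictMonoOn (fun s => (1 - s) * f s) (Ioo 0 1))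
    (hf2 : Tendsto (fun s => (1 - s) * f s) (nhdsWithin 1 (Iio 1)) (nhds σc))
    (hf4 : StrictAntiOn (fun s => (1 - s) * f' s / f s) (Ioo 0 1)) :
    Tendsto (fun s => (1 - s) ^ 2 * f' s) (nhdsWithin 1 (Iio 1)) (nhds σc) := by
  have hpos : ∀ s ∈ Ioo (0 : ℝ) 1, 0 < f s := fun s hs =>
    (hf_nonneg s (Ioo_subset_Ico_self hs)).lt_of_ne
      fun h => hs.1.ne' ((hf_zero s (Ioo_subset_Ico_self hs)).1 h.symm)
  have hne : (Ioo (0 : ℝ) 1).Nonempty := nonempty_Ioo.2 one_pos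
  have hglb : IsGLB ((fun s => (1 - s) * f' s / f s) '' Ioo 0 1) 1 :=
    ⟨forall_mem_image.2 fun s hs =>
        one_le_one_sub_mul_deriv_div hd1 hpos hf3.monotoneOn hf4.antitoneOn hs,
      fun b hb => le_one_of_forall_le_one_sub_mul_deriv_div hd1 hpos hf2 (forall_mem_image.1 hb)⟩
  have hh : Tendsto (fun s => (1 - s) * f' s / f s) (𝓝[<] 1) (𝓝 1) := by
    simpa [hglb.csInf_eq (hne.image _)] using
      hf4.antitoneOn.tendsto_nhdsWithin_Ioo_left hne ⟨1, hglb.1⟩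
  refine (by simpa using hf2.mul hh : Tendsto _ _ (𝓝 σc)).congr' ?_
  filter_upwards [Ioo_mem_nhdsLT (show (0 : ℝ) < 1 from one_pos)] with s hs
  field_simp [(hpos s hs).ne']

/-- Under assumptions (f1)-(f4), `lim_{s→1⁻} (1-s)² f'(s) = σ_c`. -/
theorem stmt0 (f f' f'' : ℝ → ℝ) (σc : ℝ) (hσ : 0 < σc)
    (hf_nonneg : ∀ s ∈ Ico (0:ℝ) 1, 0 ≤ f s)
    (hf_zero : ∀ s ∈ Ico (0:ℝ) 1, (f s = 0 ↔ s = 0))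
    (hc0 : ContinuousOn f (Ico 0 1))
    (hd1 : ∀ s ∈ Ioo (0:ℝ) 1, HasDerivAt f (f' s) s)
    (hd2 : ∀ s ∈ Ioo (0:ℝ) 1, HasDerivAt f' (f'' s) s)
    (hc2 : ContinuousOn f'' (Ioo 0 1))
    (hf3 : StrictMonoOn (fun s => (1 - s) * f s) (Ioo 0 1))
    (hf2 : Tendsto (fun s => (1 - s) * f s) (nhdsWithin 1 (Iio 1)) (nhds σc))
    (hf4 : StrictAntiOn (fun s => (1 - s) * f' s / f s) (Ioo 0 1)) :
    Tendsto (fun s => (1 - s) ^ 2 * f' s) (nhdsWithin 1 (Iio 1)) (nhds σc) :=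
  stmt0_general f f' σc hf_nonneg hf_zero hd1 hf3 hf2 hf4
end

section
/- Let f satisfy: f ∈ C²([0,1);[0,∞)), f⁻¹(0) = {0}, lim_{s→1⁻}(1-s)f(s) = σ_c ∈ (0,∞), (d/ds)[(1-s)f(s)] > 0 on (0,1), and (d/ds)[(1-s)f'(s)/f(s)] < 0 on (0,1). Define f̄(s) := f'(s)/((1-s)f(s)³). Then f̄ is strictly decreasing on (0,1), i.e. f̄'(s) < 0 for all s ∈ (0,1). -/
open Set Filter

/-! With `g(s) = (1-s)f'(s)/f(s)` and `h(s) = (1-s)f(s)` one has `f̄ = g / h²`. Here `h` is positive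
and increasing, so `(1-s)f' > f > 0` and `g` is positive, while `g` is decreasing by assumption.
A nonnegative decreasing function over a positive increasing one decreases:
`(g / h²)' = (g' h - 2 g h') / h³ < 0`. -/

theorem deriv_div_sq_neg {g h : ℝ → ℝ} {x : ℝ} (hg : DifferentiableAt ℝ g x)
    (hh : DifferentiableAt ℝ h x) (hg' : deriv g x < 0) (hgx : 0 ≤ g x) (hhx : 0 < h x)
    (hh' : 0 ≤ deriv h x) : deriv (fun t => g t / h t ^ 2) x < 0 := by
  have hD : HasDerivAt (fun t => g t / h t ^ 2)
      ((deriv g x * h x - 2 * g x * deriv h x) / h x ^ 3) x := by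
    refine (hg.hasDerivAt.fun_div (hh.hasDerivAt.fun_pow 2) (pow_pos hhx 2).ne').congr_deriv ?_
    field_simp
    ring
  rw [hD.deriv]
  refine div_neg_of_neg_of_pos ?_ (pow_pos hhx 3)
  nlinarith [mul_nonneg hgx hh']

theorem strictAntiOn_of_forall_deriv_neg {F : ℝ → ℝ} {D : Set ℝ} (hD : Convex ℝ D)
    (hDo : IsOpen D) (hF : ∀ x ∈ D, deriv F x < 0) : StrictAntiOn F D :=
  strictAntiOn_of_deriv_neg hD
    (fun x hx => (differentiableAt_of_deriv_ne_zero (hF x hx).ne).continuousAt.continuousWithinAt)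
    (by rwa [hDo.interior_eq])

-- Thanks to `x / 0 = 0` this needs neither `a ≠ 0` nor `c ≠ 0`.
theorem div_mul_pow_three_eq_div_sq (a b c : ℝ) : b / (a * c ^ 3) = a * b / c / (a * c) ^ 2 := by
  rcases eq_or_ne a 0 with rfl | ha
  · simp
  rcases eq_or_ne c 0 with rfl | hc
  · simp
  field_simp

theorem stmt2_general (f f' : ℝ → ℝ)
    (hf_nonneg : ∀ s ∈ Ico (0:ℝ) 1, 0 ≤ f s)
    (hf_zero : ∀ s ∈ Ico (0:ℝ) 1, (f s = 0 ↔ s = 0))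
    (hd1 : ∀ s ∈ Ioo (0:ℝ) 1, HasDerivAt f (f' s) s)
    (hf3 : ∀ s ∈ Ioo (0:ℝ) 1, 0 < (1 - s) * f' s - f s)
    (hf4 : ∀ s ∈ Ioo (0:ℝ) 1, deriv (fun t => (1 - t) * f' t / f t) s < 0) :
    (∀ s ∈ Ioo (0:ℝ) 1, deriv (fun t => f' t / ((1 - t) * (f t) ^ 3)) s < 0) ∧
      StrictAntiOn (fun t => f' t / ((1 - t) * (f t) ^ 3)) (Ioo 0 1) := by
  have hderiv : ∀ s ∈ Ioo (0:ℝ) 1, deriv (fun t => f' t / ((1 - t) * (f t) ^ 3)) s < 0 := by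
    intro s hs
    have hfs : 0 < f s := (hf_nonneg s (Ioo_subset_Ico_self hs)).lt_of_ne'
      fun h => hs.1.ne' ((hf_zero s (Ioo_subset_Ico_self hs)).mp h)
    have hh : HasDerivAt (fun t => (1 - t) * f t) (-1 * f s + (1 - s) * f' s) s :=
      ((hasDerivAt_id s).const_sub 1).mul (hd1 s hs)
    simp_rw [div_mul_pow_three_eq_div_sq (1 - _)]
    refine deriv_div_sq_neg (differentiableAt_of_deriv_ne_zero (hf4 s hs).ne)
      hh.differentiableAt (hf4 s hs) ?_ (mul_pos (sub_pos.2 hs.2) hfs) ?_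
    · exact div_nonneg (by linarith [hf3 s hs]) hfs.le
    · rw [hh.deriv]
      linarith [hf3 s hs]
  exact ⟨hderiv, strictAntiOn_of_forall_deriv_neg (convex_Ioo 0 1) isOpen_Ioo hderiv⟩

/-- Under assumptions (f1)-(f4), the function `f̄(s) = f'(s)/((1-s)f(s)³)` is strictly
decreasing on `(0,1)`, with `f̄'(s) < 0` there. -/
theorem stmt2 (f f' f'' : ℝ → ℝ) (σc : ℝ) (hσ : 0 < σc)
    (hf_nonneg : ∀ s ∈ Ico (0:ℝ) 1, 0 ≤ f s)
    (hf_zero : ∀ s ∈ Ico (0:ℝ) 1, (f s = 0 ↔ s = 0))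
    (hc0 : ContinuousOn f (Ico 0 1))
    (hd1 : ∀ s ∈ Ioo (0:ℝ) 1, HasDerivAt f (f' s) s)
    (hd2 : ∀ s ∈ Ioo (0:ℝ) 1, HasDerivAt f' (f'' s) s)
    (hc2 : ContinuousOn f'' (Ioo 0 1))
    (hf3 : ∀ s ∈ Ioo (0:ℝ) 1, 0 < (1 - s) * f' s - f s)
    (hf2 : Tendsto (fun s => (1 - s) * f s) (nhdsWithin 1 (Iio 1)) (nhds σc))
    (hf4 : ∀ s ∈ Ioo (0:ℝ) 1, deriv (fun t => (1 - t) * f' t / f t) s < 0) :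
    (∀ s ∈ Ioo (0:ℝ) 1, deriv (fun t => f' t / ((1 - t) * (f t) ^ 3)) s < 0) ∧
      StrictAntiOn (fun t => f' t / ((1 - t) * (f t) ^ 3)) (Ioo 0 1) :=
  stmt2_general f f' hf_nonneg hf_zero hd1 hf3 hf4
end

section
/- Under assumptions (f1)–(f5) on f (C² on [0,1), vanishing only at 0, lim_{s→1⁻}(1-s)f(s) = σ_c > 0, (1-s)f(s) strictly increasing, (1-s)f'(s)/f(s) strictly decreasing, and lim_{s→1⁻}(1-s)⁻³ (d/ds)[(1-s)f(s)] = +∞), the function f̄(s) = f'(s)/((1-s)f(s)³) satisfies lim_{s→0⁺} f̄(s) = +∞ and lim_{s→1⁻} f̄(s) = 1/σ_c². -/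
open Set Filter Topology

/-!
Write `f̄ = h / g²` with `g s = (1 - s) f(s)` and `h s = (1 - s) f'(s) / f(s)`. By (f3) `g` is
increasing with `g(0) = 0`, so `g > 0`, and `h - 1 = g' / f > 0`; by (f4) `h` is decreasing.
Near `0`, `h` stays above `h(1/2) > 0` while `g → 0`, so `f̄ → +∞`. Near `1`, `g → σ_c` and
`h` decreases to some `L ≥ 1`. If `L > 1`, then `g' = (h - 1) f ≥ (L - 1) g(1/2) / (1 - s)`, so
`g` grows at least like `-(L - 1) g(1/2) log (1 - s)`, contradicting `g → σ_c`. Hence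
`f̄ → 1 / σ_c²`.
-/

lemma HasDerivAt.one_sub_mul {f : ℝ → ℝ} {f' s : ℝ} (hf : HasDerivAt f f' s) :
    HasDerivAt (fun t => (1 - t) * f t) ((1 - s) * f' - f s) s :=
  (((hasDerivAt_id' s).const_sub 1).mul hf).congr_deriv (by ring)

lemma strictMonoOn_one_sub_mul {f f' : ℝ → ℝ} {a b : ℝ} (hc : ContinuousOn f (Ico a b))
    (hd : ∀ s ∈ Ioo a b, HasDerivAt f (f' s) s) (hpos : ∀ s ∈ Ioo a b, 0 < (1 - s) * f' s - f s) :
    StrictMonoOn (fun t => (1 - t) * f t) (Ico a b) :=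
  strictMonoOn_of_deriv_pos (convex_Ico a b) ((continuousOn_const.sub continuousOn_id).mul hc)
    fun s hs => by
      rw [interior_Ico] at hs
      exact (hd s hs).one_sub_mul.deriv ▸ hpos s hs

lemma strictAntiOn_Ioo_of_deriv_neg {h : ℝ → ℝ} {a b : ℝ}
    (hneg : ∀ s ∈ Ioo a b, deriv h s < 0) : StrictAntiOn h (Ioo a b) :=
  strictAntiOn_of_deriv_neg (convex_Ioo a b)
    (fun s hs => (differentiableAt_of_deriv_ne_zero (hneg s hs).ne).continuousAt.continuousWithinAt)
    (by simpa only [interior_Ioo] using hneg)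

lemma tendsto_const_sub_nhdsLT (b : ℝ) : Tendsto (fun t => b - t) (𝓝[<] b) (𝓝[>] 0) :=
  tendsto_nhdsWithin_iff.2
    ⟨by simpa using ((continuous_sub_left b).tendsto b).mono_left nhdsWithin_le_nhds,
      eventually_nhdsWithin_of_forall fun _ ht => mem_Ioi.2 (sub_pos.2 ht)⟩

lemma tendsto_atTop_of_div_sub_le_deriv {g g' : ℝ → ℝ} {a b c : ℝ} (hab : a < b) (hc : 0 < c)
    (hg : ∀ s ∈ Ioo a b, HasDerivAt g (g' s) s) (hle : ∀ s ∈ Ioo a b, c / (b - s) ≤ g' s) :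
    Tendsto g (𝓝[<] b) atTop := by
  obtain ⟨t₀, ht₀⟩ := nonempty_Ioo.2 hab
  set ψ := fun s => g s + c * Real.log (b - s)
  have hψ_deriv : ∀ s ∈ Ioo a b, HasDerivAt ψ (g' s - c / (b - s)) s := fun s hs => by
    have hlog := ((hasDerivAt_id' s).const_sub b).log (sub_pos.2 hs.2).ne'
    exact ((hg s hs).add (hlog.const_mul c)).congr_deriv (by ring)
  have hψ_mono : MonotoneOn ψ (Ioo a b) := by
    refine monotoneOn_of_hasDerivWithinAt_nonneg (f' := fun s => g' s - c / (b - s))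
      (convex_Ioo a b) (fun s hs => (hψ_deriv s hs).continuousAt.continuousWithinAt) ?_ ?_
    · simpa only [interior_Ioo] using fun s hs => (hψ_deriv s hs).hasDerivWithinAt
    · simpa only [interior_Ioo, sub_nonneg] using hle
  have hlower : Tendsto (fun t => ψ t₀ + -(c * Real.log (b - t))) (𝓝[<] b) atTop :=
    tendsto_atTop_add_const_left _ _ <| tendsto_neg_atBot_atTop.comp <|
      (Real.tendsto_log_nhdsGT_zero.comp (tendsto_const_sub_nhdsLT b)).const_mul_atBot hc
  refine tendsto_atTop_mono' _ ?_ hlower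
  filter_upwards [Ioo_mem_nhdsLT ht₀.2] with t ht
  have := hψ_mono ht₀ ⟨ht₀.1.trans ht.1, ht.2⟩ ht.1.le
  simp only [ψ] at this ⊢
  linarith

lemma tendsto_div_sq_atTop_of_le {α : Type*} {l : Filter α} {u v : α → ℝ} {c : ℝ} (hc : 0 < c)
    (hv : Tendsto v l (𝓝 0)) (hv_pos : ∀ᶠ x in l, 0 < v x) (hu : ∀ᶠ x in l, c ≤ u x) :
    Tendsto (fun x => u x / v x ^ 2) l atTop := by
  have hv_sq : Tendsto (fun x => v x ^ 2) l (𝓝[>] 0) := tendsto_nhdsWithin_iff.2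
    ⟨by simpa using hv.pow 2, hv_pos.mono fun x hx => pow_pos hx 2⟩
  refine tendsto_atTop_mono' _ ?_ ((tendsto_inv_nhdsGT_zero.comp hv_sq).const_mul_atTop hc)
  filter_upwards [hu, hv_pos] with x hux hvx
  exact mul_le_mul_of_nonneg_right hux (inv_nonneg.2 (pow_pos hvx 2).le)

lemma mul_div_div_mul_sq (a b c : ℝ) : a * b / c / (a * c) ^ 2 = b / (a * c ^ 3) := by
  rcases eq_or_ne a 0 with rfl | ha
  · simp
  rcases eq_or_ne c 0 with rfl | hc
  · simp
  field_simp

lemma one_lt_one_sub_mul_div {f f' : ℝ → ℝ} {s : ℝ} (hs : s < 1) (hg : 0 < (1 - s) * f s)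
    (hg' : 0 < (1 - s) * f' s - f s) : 1 < (1 - s) * f' s / f s := by
  rw [one_lt_div (pos_of_mul_pos_right hg (sub_pos.2 hs).le)]
  linarith

lemma tendsto_one_sub_mul_div_nhdsLT_one {f f' : ℝ → ℝ} {σ : ℝ}
    (hd : ∀ s ∈ Ioo (0:ℝ) 1, HasDerivAt f (f' s) s)
    (hg_pos : ∀ s ∈ Ioo (0:ℝ) 1, 0 < (1 - s) * f s)
    (hg_mono : MonotoneOn (fun s => (1 - s) * f s) (Ioo 0 1))
    (hg_deriv_pos : ∀ s ∈ Ioo (0:ℝ) 1, 0 < (1 - s) * f' s - f s)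
    (hh_anti : AntitoneOn (fun s => (1 - s) * f' s / f s) (Ioo 0 1))
    (hg_lim : Tendsto (fun s => (1 - s) * f s) (𝓝[<] 1) (𝓝 σ)) :
    Tendsto (fun s => (1 - s) * f' s / f s) (𝓝[<] 1) (𝓝 1) := by
  have hf_pos : ∀ s ∈ Ioo (0:ℝ) 1, 0 < f s := fun s hs =>
    pos_of_mul_pos_right (hg_pos s hs) (sub_pos.2 hs.2).le
  have hone_le : ∀ s ∈ Ioo (0:ℝ) 1, 1 ≤ (1 - s) * f' s / f s := fun s hs =>
    (one_lt_one_sub_mul_div hs.2 (hg_pos s hs) (hg_deriv_pos s hs)).le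
  have hbdd : BddBelow ((fun s => (1 - s) * f' s / f s) '' Ioo 0 1) :=
    ⟨1, forall_mem_image.2 hone_le⟩
  have hhalf : (1 / 2 : ℝ) ∈ Ioo 0 1 := by norm_num
  have hlim := hh_anti.tendsto_nhdsWithin_Ioo_left ⟨_, hhalf⟩ hbdd
  set L := sInf ((fun s => (1 - s) * f' s / f s) '' Ioo 0 1)
  have hL_le : ∀ s ∈ Ioo (0:ℝ) 1, L ≤ (1 - s) * f' s / f s := fun s hs =>
    csInf_le hbdd (mem_image_of_mem _ hs)
  suffices hL : L ≤ 1 by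
    rwa [le_antisymm hL (le_csInf ⟨_, mem_image_of_mem _ hhalf⟩
      (forall_mem_image.2 hone_le))] at hlim
  by_contra! hL
  have hblowup : Tendsto (fun s => (1 - s) * f s) (𝓝[<] 1) atTop := by
    refine tendsto_atTop_of_div_sub_le_deriv (by norm_num : (1 / 2 : ℝ) < 1)
      (mul_pos (sub_pos.2 hL) (hg_pos _ hhalf))
      (fun s hs => (hd s ⟨by linarith [hs.1], hs.2⟩).one_sub_mul) fun s hs => ?_
    have hs' : s ∈ Ioo (0:ℝ) 1 := ⟨by linarith [hs.1], hs.2⟩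
    have h1s : 0 < 1 - s := sub_pos.2 hs.2
    have hLf : L * f s ≤ (1 - s) * f' s := (le_div_iff₀ (hf_pos s hs')).1 (hL_le s hs')
    have hg : (1 - 1 / 2) * f (1 / 2) ≤ (1 - s) * f s := hg_mono hhalf hs' hs.1.le
    rw [div_le_iff₀ h1s]
    nlinarith [mul_le_mul_of_nonneg_left hg (sub_pos.2 hL).le,
      mul_le_mul_of_nonneg_left hLf h1s.le]
  exact not_tendsto_nhds_of_tendsto_atTop hblowup σ hg_lim

theorem stmt3_general (f f' : ℝ → ℝ) (σc : ℝ) (hσ : 0 < σc)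
    (hf_zero : ∀ s ∈ Ico (0:ℝ) 1, (f s = 0 ↔ s = 0))
    (hc0 : ContinuousOn f (Ico 0 1))
    (hd1 : ∀ s ∈ Ioo (0:ℝ) 1, HasDerivAt f (f' s) s)
    (hf3 : ∀ s ∈ Ioo (0:ℝ) 1, 0 < (1 - s) * f' s - f s)
    (hf2 : Tendsto (fun s => (1 - s) * f s) (nhdsWithin 1 (Iio 1)) (nhds σc))
    (hf4 : ∀ s ∈ Ioo (0:ℝ) 1, deriv (fun t => (1 - t) * f' t / f t) s < 0) :
    Tendsto (fun s => f' s / ((1 - s) * (f s) ^ 3)) (nhdsWithin 0 (Ioi 0)) atTop ∧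
      Tendsto (fun s => f' s / ((1 - s) * (f s) ^ 3)) (nhdsWithin 1 (Iio 1))
        (nhds (1 / σc ^ 2)) := by
  set g := fun t => (1 - t) * f t
  set h := fun t => (1 - t) * f' t / f t
  have hfbar : (fun s => f' s / ((1 - s) * f s ^ 3)) = fun s => h s / g s ^ 2 :=
    funext fun s => (mul_div_div_mul_sq _ _ _).symm
  have hg_cont : ContinuousOn g (Ico 0 1) := (continuousOn_const.sub continuousOn_id).mul hc0
  have hg_mono : StrictMonoOn g (Ico 0 1) := strictMonoOn_one_sub_mul hc0 hd1 hf3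
  have hg0 : g 0 = 0 := by simp [g, (hf_zero 0 ⟨le_rfl, one_pos⟩).2 rfl]
  have hg_pos : ∀ s ∈ Ioo (0:ℝ) 1, 0 < g s := fun s hs =>
    hg0 ▸ hg_mono ⟨le_rfl, one_pos⟩ (Ioo_subset_Ico_self hs) hs.1
  have hh_anti : StrictAntiOn h (Ioo 0 1) := strictAntiOn_Ioo_of_deriv_neg hf4
  have hhalf : (1 / 2 : ℝ) ∈ Ioo 0 1 := by norm_num
  rw [hfbar]
  constructor
  · have hg_lim : Tendsto g (𝓝[>] 0) (𝓝 0) := by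
      simpa only [hg0, nhdsWithin_Ioo_eq_nhdsGT one_pos] using
        ((hg_cont 0 ⟨le_rfl, one_pos⟩).mono Ioo_subset_Ico_self).tendsto
    have hh_half : 0 < h (1 / 2) :=
      one_pos.trans (one_lt_one_sub_mul_div hhalf.2 (hg_pos _ hhalf) (hf3 _ hhalf))
    refine tendsto_div_sq_atTop_of_le hh_half hg_lim ?_ ?_
    · filter_upwards [Ioo_mem_nhdsGT one_pos] with s hs using hg_pos s hs
    · filter_upwards [Ioo_mem_nhdsGT (one_half_pos : (0:ℝ) < 1 / 2)] with s hs
      exact hh_anti.antitoneOn ⟨hs.1, hs.2.trans hhalf.2⟩ hhalf hs.2.le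
  · exact (tendsto_one_sub_mul_div_nhdsLT_one hd1 hg_pos
      (hg_mono.monotoneOn.mono Ioo_subset_Ico_self) hf3 hh_anti.antitoneOn hf2).div
      (hf2.pow 2) (by positivity)

/-- Under assumptions (f1)-(f5), `f̄(s) = f'(s)/((1-s)f(s)³)` satisfies
`f̄(s) → +∞` as `s → 0⁺` and `f̄(s) → 1/σ_c²` as `s → 1⁻`. -/
theorem stmt3 (f f' f'' : ℝ → ℝ) (σc : ℝ) (hσ : 0 < σc)
    (hf_nonneg : ∀ s ∈ Ico (0:ℝ) 1, 0 ≤ f s)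
    (hf_zero : ∀ s ∈ Ico (0:ℝ) 1, (f s = 0 ↔ s = 0))
    (hc0 : ContinuousOn f (Ico 0 1))
    (hd1 : ∀ s ∈ Ioo (0:ℝ) 1, HasDerivAt f (f' s) s)
    (hd2 : ∀ s ∈ Ioo (0:ℝ) 1, HasDerivAt f' (f'' s) s)
    (hc2 : ContinuousOn f'' (Ioo 0 1))
    (hf3 : ∀ s ∈ Ioo (0:ℝ) 1, 0 < (1 - s) * f' s - f s)
    (hf2 : Tendsto (fun s => (1 - s) * f s) (nhdsWithin 1 (Iio 1)) (nhds σc))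
    (hf4 : ∀ s ∈ Ioo (0:ℝ) 1, deriv (fun t => (1 - t) * f' t / f t) s < 0)
    (hf5 : Tendsto (fun s => ((1 - s) * f' s - f s) / (1 - s) ^ 3)
      (nhdsWithin 1 (Iio 1)) atTop) :
    Tendsto (fun s => f' s / ((1 - s) * (f s) ^ 3)) (nhdsWithin 0 (Ioi 0)) atTop ∧
      Tendsto (fun s => f' s / ((1 - s) * (f s) ^ 3)) (nhdsWithin 1 (Iio 1))
        (nhds (1 / σc ^ 2)) :=
  stmt3_general f f' σc hσ hf_zero hc0 hd1 hf3 hf2 hf4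
end

section
/- Under assumptions (f1)–(f5), for every α ∈ (0, σ_c/2) there exists a unique z_α ∈ (0,1) such that f'(z_α)/((1-z_α)f(z_α)³) = 1/(2α)², and moreover (1-z_α)f(z_α) > 2α. -/
/-!
Write `F s = (1 - s) f s` and `h s = (1 - s) f' s / f s`, so that `f' / ((1 - s) f³) = h / F²`.
By (f3) `F` increases, from `0` to `σ_c`, and `h - 1 = (1 - s) F' / F > 0`; by (f4) `h` decreases.
Hence `h / F²` is strictly decreasing, which gives uniqueness, and it is large near `0`.
Since `F` stays bounded, `h` comes arbitrarily close to `1`, while `c F² → c σ_c² > 1` for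
`c = 1 / (2α)²`; so `h / F² < c` somewhere, and the intermediate value theorem gives `z_α`.
Finally `c F(z_α)² = h(z_α) > 1`, which is `F(z_α) > 2α`.
-/

open Set Filter Topology Real

theorem tendsto_log_sub_nhdsLT (b : ℝ) : Tendsto (fun s => log (b - s)) (𝓝[<] b) atBot := by
  refine tendsto_log_nhdsGT_zero.comp
    (tendsto_nhdsWithin_of_tendsto_nhds_of_eventually_within _ ?_ ?_)
  · simpa using ((continuous_sub_left b).tendsto b).mono_left nhdsWithin_le_nhds
  · filter_upwards [self_mem_nhdsWithin] with s (hs : s < b) using sub_pos.2 hs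

/-- If `(b - s) F' ≥ ε F` throughout `(a, b)`, then `F (b - s) ^ ε` is nondecreasing there,
so `F` would blow up at `b`. -/
theorem exists_sub_mul_deriv_lt_mul_of_isBoundedUnder {F F' : ℝ → ℝ} {a b ε : ℝ} (hab : a < b)
    (hF : ∀ s ∈ Ioo a b, HasDerivAt F (F' s) s) (hF_pos : ∀ s ∈ Ioo a b, 0 < F s)
    (hF_bdd : IsBoundedUnder (· ≤ ·) (𝓝[<] b) F) (hε : 0 < ε) :
    ∃ s ∈ Ioo a b, (b - s) * F' s < ε * F s := by
  by_contra! hge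
  set G := fun s => log (F s) + ε * log (b - s)
  have hG_deriv : ∀ s ∈ Ioo a b, HasDerivAt G (F' s / F s - ε / (b - s)) s := fun s hs =>
    ((hF s hs).log (hF_pos s hs).ne').add
      ((((hasDerivAt_id' s).const_sub b).log (sub_pos.2 hs.2).ne').const_mul ε)
      |>.congr_deriv (by ring)
  have hG_mono : MonotoneOn G (Ioo a b) := by
    refine monotoneOn_of_hasDerivWithinAt_nonneg (f' := fun s => F' s / F s - ε / (b - s))
      (convex_Ioo a b)
      (fun s hs => (hG_deriv s hs).continuousAt.continuousWithinAt) ?_ ?_ <;> rw [interior_Ioo]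
    · exact fun s hs => (hG_deriv s hs).hasDerivWithinAt
    · intro s hs
      have := hge s hs
      rw [sub_nonneg, div_le_div_iff₀ (sub_pos.2 hs.2) (hF_pos s hs)]
      linarith
  obtain ⟨s₀, hs₀⟩ := nonempty_Ioo.2 hab
  have hlogF : Tendsto (fun s => log (F s)) (𝓝[<] b) atTop := by
    refine tendsto_atTop_mono' _ ?_ (tendsto_atTop_add_const_left _ (G s₀)
      ((tendsto_log_sub_nhdsLT b).const_mul_atBot_of_neg (neg_neg_of_pos hε)))
    filter_upwards [Ioo_mem_nhdsLT hs₀.2] with s hs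
    have := hG_mono hs₀ ⟨hs₀.1.trans hs.1, hs.2⟩ hs.1.le
    simp only [G] at this
    linarith
  refine not_isBoundedUnder_of_tendsto_atTop ((tendsto_exp_atTop.comp hlogF).congr' ?_) hF_bdd
  filter_upwards [Ioo_mem_nhdsLT hs₀.2] with s hs
  exact exp_log (hF_pos s ⟨hs₀.1.trans hs.1, hs.2⟩)

theorem StrictAntiOn.div_sq_of_monotoneOn {h F : ℝ → ℝ} {D : Set ℝ} (hh : StrictAntiOn h D)
    (hF : MonotoneOn F D) (hh_pos : ∀ s ∈ D, 0 < h s) (hF_pos : ∀ s ∈ D, 0 < F s) :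
    StrictAntiOn (fun s => h s / F s ^ 2) D := fun x hx y hy hxy => by
  have := hF_pos x hx
  have := hF_pos y hy
  calc h y / F y ^ 2 < h x / F y ^ 2 := by gcongr; exact hh hx hy hxy
    _ ≤ h x / F x ^ 2 := by gcongr; exacts [(hh_pos x hx).le, hF hx hy hxy.le]

theorem ContinuousOn.exists_eq_of_eventually_gt {g : ℝ → ℝ} {a b c s : ℝ}
    (hg : ContinuousOn g (Ioo a b)) (hg_near : ∀ᶠ x in 𝓝[>] a, c < g x) (hs : s ∈ Ioo a b)
    (hgs : g s < c) : ∃ z ∈ Ioo a b, g z = c := by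
  obtain ⟨r, hgr, hr⟩ := (hg_near.and (Ioo_mem_nhdsGT hs.1)).exists
  have hsub : Icc r s ⊆ Ioo a b := Icc_subset_Ioo hr.1 hs.2
  obtain ⟨z, hz, hgz⟩ := intermediate_value_Icc' hr.2.le (hg.mono hsub) ⟨hgs.le, hgr.le⟩
  exact ⟨z, hsub hz, hgz⟩

theorem exists_div_sq_eq {F h : ℝ → ℝ} {a b σ c : ℝ} (hab : a < b)
    (hF_pos : ∀ s ∈ Ioo a b, 0 < F s) (hF_cont : ContinuousOn F (Ioo a b))
    (hF_a : Tendsto F (𝓝[>] a) (𝓝 0)) (hF_b : Tendsto F (𝓝[<] b) (𝓝 σ))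
    (hh_cont : ContinuousOn h (Ioo a b)) (hh_anti : AntitoneOn h (Ioo a b))
    (hh_one : ∀ s ∈ Ioo a b, 1 ≤ h s) (hh_inf : ∀ r, 1 < r → ∃ s ∈ Ioo a b, h s < r)
    (hc : 1 < c * σ ^ 2) : ∃ z ∈ Ioo a b, h z / F z ^ 2 = c := by
  have hg_near : ∀ᶠ x in 𝓝[>] a, c < h x / F x ^ 2 := by
    have : Tendsto (fun x => c * F x ^ 2) (𝓝[>] a) (𝓝 0) := by
      simpa using (hF_a.pow 2).const_mul c
    filter_upwards [this.eventually (gt_mem_nhds one_pos), Ioo_mem_nhdsGT hab] with x hx hx'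
    have := hF_pos x hx'
    rw [lt_div_iff₀ (by positivity)]
    linarith [hh_one x hx']
  obtain ⟨r, hr_one, hr_c⟩ := exists_between hc
  obtain ⟨s₁, hs₁, hhs₁⟩ := hh_inf r hr_one
  obtain ⟨s₂, hFs₂, hs₂⟩ := ((((hF_b.pow 2).const_mul c).eventually (lt_mem_nhds hr_c)).and
    (Ioo_mem_nhdsLT hs₁.2)).exists
  have hs₂_mem : s₂ ∈ Ioo a b := ⟨hs₁.1.trans hs₂.1, hs₂.2⟩
  refine (hh_cont.div (hF_cont.pow 2) fun x hx => (pow_pos (hF_pos x hx) 2).ne')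
    |>.exists_eq_of_eventually_gt hg_near hs₂_mem ?_
  show h s₂ / F s₂ ^ 2 < c
  rw [div_lt_iff₀ (pow_pos (hF_pos _ hs₂_mem) 2)]
  linarith [hh_anti hs₁ hs₂_mem hs₂.1.le]

theorem exists_unique_div_sq_eq {F h : ℝ → ℝ} {a b σ c : ℝ} (hab : a < b)
    (hF_pos : ∀ s ∈ Ioo a b, 0 < F s) (hF_cont : ContinuousOn F (Ioo a b))
    (hF_mono : MonotoneOn F (Ioo a b))
    (hF_a : Tendsto F (𝓝[>] a) (𝓝 0)) (hF_b : Tendsto F (𝓝[<] b) (𝓝 σ))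
    (hh_cont : ContinuousOn h (Ioo a b)) (hh_anti : StrictAntiOn h (Ioo a b))
    (hh_one : ∀ s ∈ Ioo a b, 1 < h s) (hh_inf : ∀ r, 1 < r → ∃ s ∈ Ioo a b, h s < r)
    (hc : 1 < c * σ ^ 2) :
    ∃ z ∈ Ioo a b, h z / F z ^ 2 = c ∧ 1 < c * F z ^ 2 ∧
      ∀ w ∈ Ioo a b, h w / F w ^ 2 = c → w = z := by
  obtain ⟨z, hz, hgz⟩ := exists_div_sq_eq hab hF_pos hF_cont hF_a hF_b hh_cont hh_anti.antitoneOn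
    (fun s hs => (hh_one s hs).le) hh_inf hc
  refine ⟨z, hz, hgz, ?_, fun w hw hgw => ?_⟩
  · rw [← hgz, div_mul_cancel₀ _ (pow_pos (hF_pos z hz) 2).ne']
    exact hh_one z hz
  · exact (hh_anti.div_sq_of_monotoneOn hF_mono (fun s hs => one_pos.trans (hh_one s hs))
      hF_pos).injOn hw hz (hgw.trans hgz.symm)

section OneSubMul

variable {f f' : ℝ → ℝ}

theorem hasDerivAt_one_sub_mul {s : ℝ} (hf : HasDerivAt f (f' s) s) :
    HasDerivAt (fun t => (1 - t) * f t) ((1 - s) * f' s - f s) s :=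
  (((hasDerivAt_id' s).const_sub 1).mul hf).congr_deriv (by ring)

theorem monotoneOn_one_sub_mul (hf : ∀ s ∈ Ioo (0:ℝ) 1, HasDerivAt f (f' s) s)
    (hf' : ∀ s ∈ Ioo (0:ℝ) 1, 0 ≤ (1 - s) * f' s - f s) :
    MonotoneOn (fun s => (1 - s) * f s) (Ioo 0 1) :=
  monotoneOn_of_hasDerivWithinAt_nonneg (convex_Ioo 0 1)
    (fun s hs => (hasDerivAt_one_sub_mul (hf s hs)).continuousAt.continuousWithinAt)
    (by simpa using fun s hs => (hasDerivAt_one_sub_mul (hf s hs)).hasDerivWithinAt)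
    (by simpa using hf')

theorem tendsto_one_sub_mul_nhdsGT_zero (hf : ContinuousOn f (Ico 0 1)) (hf₀ : f 0 = 0) :
    Tendsto (fun s => (1 - s) * f s) (𝓝[>] 0) (𝓝 0) := by
  have : ContinuousWithinAt (fun s => (1 - s) * f s) (Ico 0 1) 0 :=
    (continuousWithinAt_const.sub continuousWithinAt_id).mul (hf 0 ⟨le_rfl, one_pos⟩)
  simpa only [ContinuousWithinAt, hf₀, mul_zero] using
    this.mono_of_mem_nhdsWithin (mem_of_superset (Ioo_mem_nhdsGT one_pos) Ioo_subset_Ico_self)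

theorem exists_one_sub_mul_deriv_div_lt (hf : ∀ s ∈ Ioo (0:ℝ) 1, HasDerivAt f (f' s) s)
    (hf_pos : ∀ s ∈ Ioo (0:ℝ) 1, 0 < f s)
    (hbdd : IsBoundedUnder (· ≤ ·) (𝓝[<] 1) fun s => (1 - s) * f s) {r : ℝ} (hr : 1 < r) :
    ∃ s ∈ Ioo (0:ℝ) 1, (1 - s) * f' s / f s < r := by
  obtain ⟨s, hs, hlt⟩ := exists_sub_mul_deriv_lt_mul_of_isBoundedUnder one_pos
    (fun s hs => hasDerivAt_one_sub_mul (hf s hs))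
    (fun s hs => mul_pos (sub_pos.2 hs.2) (hf_pos s hs)) hbdd (sub_pos.2 hr)
  refine ⟨s, hs, (div_lt_iff₀ (hf_pos s hs)).2 ?_⟩
  have := lt_of_mul_lt_mul_left (a := 1 - s) (b := (1 - s) * f' s - f s) (c := (r - 1) * f s)
    (by linarith) (sub_pos.2 hs.2).le
  linarith

theorem div_one_sub_mul_pow_three_eq {s : ℝ} (hs : s ≠ 1) (hf : f s ≠ 0) :
    f' s / ((1 - s) * f s ^ 3) = (1 - s) * f' s / f s / ((1 - s) * f s) ^ 2 := by
  have : 1 - s ≠ 0 := sub_ne_zero.2 hs.symm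
  field_simp

end OneSubMul

theorem stmt4_general (f f' : ℝ → ℝ) (σc : ℝ)
    (hf_nonneg : ∀ s ∈ Ico (0:ℝ) 1, 0 ≤ f s)
    (hf_zero : ∀ s ∈ Ico (0:ℝ) 1, (f s = 0 ↔ s = 0))
    (hc0 : ContinuousOn f (Ico 0 1))
    (hd1 : ∀ s ∈ Ioo (0:ℝ) 1, HasDerivAt f (f' s) s)
    (hf3 : ∀ s ∈ Ioo (0:ℝ) 1, 0 < (1 - s) * f' s - f s)
    (hf2 : Tendsto (fun s => (1 - s) * f s) (nhdsWithin 1 (Iio 1)) (nhds σc))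
    (hf4 : ∀ s ∈ Ioo (0:ℝ) 1, deriv (fun t => (1 - t) * f' t / f t) s < 0) :
    ∀ α ∈ Ioo (0:ℝ) (σc / 2), ∃ z ∈ Ioo (0:ℝ) 1,
      f' z / ((1 - z) * (f z) ^ 3) = 1 / (2 * α) ^ 2 ∧
      2 * α < (1 - z) * f z ∧
      ∀ w ∈ Ioo (0:ℝ) 1, f' w / ((1 - w) * (f w) ^ 3) = 1 / (2 * α) ^ 2 → w = z := by
  rintro α ⟨hα, hασ⟩
  have hf_pos : ∀ s ∈ Ioo (0:ℝ) 1, 0 < f s := fun s hs =>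
    (hf_nonneg s (Ioo_subset_Ico_self hs)).lt_of_ne' fun h0 =>
      hs.1.ne' ((hf_zero s (Ioo_subset_Ico_self hs)).1 h0)
  have hF_pos : ∀ s ∈ Ioo (0:ℝ) 1, 0 < (1 - s) * f s := fun s hs =>
    mul_pos (sub_pos.2 hs.2) (hf_pos s hs)
  -- `hf4` forces `(1 - s) f' / f` to be differentiable, hence continuous
  have hh_cont : ContinuousOn (fun s => (1 - s) * f' s / f s) (Ioo 0 1) := fun s hs =>
    (differentiableAt_of_deriv_ne_zero (hf4 s hs).ne).continuousAt.continuousWithinAt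
  have hc : 1 < 1 / (2 * α) ^ 2 * σc ^ 2 := by
    rw [one_div_mul_eq_div, one_lt_div (by positivity)]
    gcongr
    linarith
  obtain ⟨z, hz, hgz, hFz, huniq⟩ := exists_unique_div_sq_eq one_pos hF_pos
    (fun s hs => (hasDerivAt_one_sub_mul (hd1 s hs)).continuousAt.continuousWithinAt)
    (monotoneOn_one_sub_mul hd1 fun s hs => (hf3 s hs).le)
    (tendsto_one_sub_mul_nhdsGT_zero hc0 ((hf_zero 0 ⟨le_rfl, one_pos⟩).2 rfl)) hf2 hh_cont
    (strictAntiOn_of_deriv_neg (convex_Ioo 0 1) hh_cont (by simpa using hf4))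
    (fun s hs => (one_lt_div (hf_pos s hs)).2 (by linarith [hf3 s hs]))
    (fun r hr => exists_one_sub_mul_deriv_div_lt hd1 hf_pos hf2.isBoundedUnder_le hr) hc
  have hg : ∀ s ∈ Ioo (0:ℝ) 1,
      f' s / ((1 - s) * f s ^ 3) = (1 - s) * f' s / f s / ((1 - s) * f s) ^ 2 :=
    fun s hs => div_one_sub_mul_pow_three_eq hs.2.ne (hf_pos s hs).ne'
  refine ⟨z, hz, (hg z hz).trans hgz, ?_, fun w hw hgw => huniq w hw ((hg w hw).symm.trans hgw)⟩
  rw [one_div_mul_eq_div, one_lt_div (by positivity)] at hFz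
  exact lt_of_pow_lt_pow_left₀ 2 (hF_pos z hz).le hFz

/-- Under assumptions (f1)-(f5), for every `α ∈ (0, σ_c/2)` there is a unique
`z_α ∈ (0,1)` with `f'(z_α)/((1-z_α)f(z_α)³) = 1/(2α)²`, and `(1-z_α)f(z_α) > 2α`. -/
theorem stmt4 (f f' f'' : ℝ → ℝ) (σc : ℝ) (hσ : 0 < σc)
    (hf_nonneg : ∀ s ∈ Ico (0:ℝ) 1, 0 ≤ f s)
    (hf_zero : ∀ s ∈ Ico (0:ℝ) 1, (f s = 0 ↔ s = 0))
    (hc0 : ContinuousOn f (Ico 0 1))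
    (hd1 : ∀ s ∈ Ioo (0:ℝ) 1, HasDerivAt f (f' s) s)
    (hd2 : ∀ s ∈ Ioo (0:ℝ) 1, HasDerivAt f' (f'' s) s)
    (hc2 : ContinuousOn f'' (Ioo 0 1))
    (hf3 : ∀ s ∈ Ioo (0:ℝ) 1, 0 < (1 - s) * f' s - f s)
    (hf2 : Tendsto (fun s => (1 - s) * f s) (nhdsWithin 1 (Iio 1)) (nhds σc))
    (hf4 : ∀ s ∈ Ioo (0:ℝ) 1, deriv (fun t => (1 - t) * f' t / f t) s < 0)
    (hf5 : Tendsto (fun s => ((1 - s) * f' s - f s) / (1 - s) ^ 3)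
      (nhdsWithin 1 (Iio 1)) atTop) :
    ∀ α ∈ Ioo (0:ℝ) (σc / 2), ∃ z ∈ Ioo (0:ℝ) 1,
      f' z / ((1 - z) * (f z) ^ 3) = 1 / (2 * α) ^ 2 ∧
      2 * α < (1 - z) * f z ∧
      ∀ w ∈ Ioo (0:ℝ) 1, f' w / ((1 - w) * (f w) ^ 3) = 1 / (2 * α) ^ 2 → w = z :=
  stmt4_general f f' σc hf_nonneg hf_zero hc0 hd1 hf3 hf2 hf4
end

section
/- Let α ∈ (0,σ_c/2), m ∈ (0,z_α) with (1-m)f(m) > 2α, under assumptions (f1)–(f5). Then the solution y of y'' = ((1-y)/4)[(2α)²f'(y)/((1-y)f(y)³) - 1], y(0)=m, y'(0)=0, is periodic: there exists t₂ > 0 such that y is strictly increasing on (0,t₂), attains a maximum M ∈ (z_α,1) at t₂, and y(t+2t₂) = y(t) for all t. -/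
open Set Filter Topology

/-!
Write `g = force f f' α` for the right-hand side, so that `y'' = g(y)` while `0 < y < 1`, and
let `Φ = potential f α`, so that `Φ' = 2 g` and `y'² - Φ(y)` is conserved. Since
`f'(s) / ((1-s) f(s)³)` is strictly decreasing, `g > 0` on `(0, z)` and `g < 0` on `(z, 1)`:
`Φ` increases up to `z` and then decreases to `0` at `1⁻`, and `Φ(m) > 0` because
`(1-m) f(m) > 2α`. Hence `Φ(M) = Φ(m)` for a unique `M ∈ (z, 1)`, the superlevel set
`{Φ ≥ Φ(m)}` is `[m, M]`, and energy conservation traps `y` in `[m, M]`. There `y` is pushed up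
while below `z` and pulled back uniformly above `z`, so `y'` has a first positive zero `t₂`, where
`y = M`. As `g` is Lipschitz on `[m, M]`, uniqueness for the ODE makes `y` symmetric about both
turning points `0` and `t₂`, hence `2 t₂`-periodic.
-/

theorem ODE_second_order_solution_unique {G : ℝ → ℝ} {K : NNReal} {S : Set ℝ}
    (hG : LipschitzOnWith K G S) {y y' w w' : ℝ → ℝ}
    (hy : ∀ t, HasDerivAt y (y' t) t) (hy' : ∀ t, HasDerivAt y' (G (y t)) t)
    (hyS : ∀ t, y t ∈ S)
    (hw : ∀ t, HasDerivAt w (w' t) t) (hw' : ∀ t, HasDerivAt w' (G (w t)) t)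
    (hwS : ∀ t, w t ∈ S) {t₀ : ℝ} (h₀ : y t₀ = w t₀) (h₀' : y' t₀ = w' t₀) : y = w := by
  have hv : LipschitzOnWith (max 1 (K * 1)) (fun p : ℝ × ℝ => (p.2, G p.1)) (S ×ˢ univ) :=
    LipschitzWith.prod_snd.lipschitzOnWith.prodMk
      (hG.comp LipschitzWith.prod_fst.lipschitzOnWith fun _ hp => hp.1)
  have := ODE_solution_unique_univ (v := fun _ p => (p.2, G p.1)) (s := fun _ => S ×ˢ univ)
    (f := fun t => (y t, y' t)) (g := fun t => (w t, w' t)) (t₀ := t₀) (fun _ => hv)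
    (fun t => ⟨(hy t).prodMk (hy' t), hyS t, trivial⟩)
    (fun t => ⟨(hw t).prodMk (hw' t), hwS t, trivial⟩) (by simp [h₀, h₀'])
  funext t
  exact congrArg Prod.fst (congrFun this t)

theorem apply_two_mul_sub_eq_of_deriv_eq_zero {G : ℝ → ℝ} {K : NNReal} {S : Set ℝ}
    (hG : LipschitzOnWith K G S) {y y' : ℝ → ℝ}
    (hy : ∀ t, HasDerivAt y (y' t) t) (hy' : ∀ t, HasDerivAt y' (G (y t)) t)
    (hyS : ∀ t, y t ∈ S) {t₀ : ℝ} (h₀ : y' t₀ = 0) (t : ℝ) : y (2 * t₀ - t) = y t := by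
  have hw : ∀ t, HasDerivAt (fun s => y (2 * t₀ - s)) (-y' (2 * t₀ - t)) t :=
    fun t => (hy _).comp_const_sub _ t
  have hw' : ∀ t, HasDerivAt (fun s => -y' (2 * t₀ - s)) (G (y (2 * t₀ - t))) t := fun t => by
    simpa using ((hy' _).comp_const_sub _ t).fun_neg
  have h₁ : 2 * t₀ - t₀ = t₀ := by ring
  exact congrFun (ODE_second_order_solution_unique hG hw hw' (fun t => hyS _) hy hy' hyS
    (t₀ := t₀) (by rw [h₁]) (by rw [h₁, h₀, neg_zero])) t

/-- The times at which `y ∈ K` with the initial energy form a closed set, which is also open since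
the energy is locally constant wherever `y ∈ U`; so it is all of `ℝ`. -/
theorem mem_and_sq_eq_of_superlevel_subset {U K : Set ℝ} (hU : IsOpen U) (hK : IsClosed K)
    (hKU : K ⊆ U) {g Φ : ℝ → ℝ} (hΦ : ∀ s ∈ U, HasDerivAt Φ (2 * g s) s) {m : ℝ} (hm : m ∈ U)
    (hsuper : ∀ s ∈ U, Φ m ≤ Φ s → s ∈ K) {y y' : ℝ → ℝ}
    (hy : ∀ t, HasDerivAt y (y' t) t) (hy' : ∀ t, y t ∈ U → HasDerivAt y' (g (y t)) t)
    (hy0 : y 0 = m) (hy'0 : y' 0 = 0) (t : ℝ) :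
    y t ∈ K ∧ y' t ^ 2 = Φ (y t) - Φ m := by
  set E : ℝ → ℝ := fun t => y' t ^ 2 - Φ (y t)
  have hE : ∀ t, y t ∈ U → HasDerivAt E 0 t := fun t ht =>
    (((hy' t ht).pow 2).sub ((hΦ _ ht).comp t (hy t))).congr_deriv (by ring)
  have hycont : Continuous y := continuous_iff_continuousAt.2 fun t => (hy t).continuousAt
  set A := y ⁻¹' K ∩ E ⁻¹' {-Φ m}
  have hA : A = y ⁻¹' U ∩ E ⁻¹' {-Φ m} := by
    ext t
    refine ⟨fun ht => ⟨hKU ht.1, ht.2⟩, fun ht => ⟨hsuper _ ht.1 ?_, ht.2⟩⟩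
    have : E t = -Φ m := ht.2
    nlinarith [sq_nonneg (y' t)]
  have hclosed : IsClosed A :=
    ContinuousOn.preimage_isClosed_of_isClosed
      (fun t ht => (hE t (hKU ht)).continuousAt.continuousWithinAt) (hK.preimage hycont)
      isClosed_singleton
  have hopen : IsOpen A := hA ▸ (hU.preimage hycont).isOpen_inter_preimage_of_deriv_eq_zero
    (fun t ht => (hE t ht).differentiableAt.differentiableWithinAt) (fun t ht => (hE t ht).deriv) _
  have h0 : (0 : ℝ) ∈ A := ⟨by simpa [hy0] using hsuper m hm le_rfl, by simp [E, hy0, hy'0]⟩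
  have htA : t ∈ A := by rw [IsClopen.eq_univ ⟨hclosed, hopen⟩ ⟨0, h0⟩]; trivial
  exact ⟨htA.1, by linarith [show E t = -Φ m from htA.2]⟩

theorem exists_gt_of_pos_le_deriv {u u' : ℝ → ℝ} {a c : ℝ} (hc : 0 < c)
    (hu : ∀ t ≥ a, HasDerivAt u (u' t) t) (hle : ∀ t ≥ a, c ≤ u' t) (B : ℝ) :
    ∃ t ≥ a, B < u t := by
  have hgrowth : ∀ t ≥ a, c * (t - a) ≤ u t - u a := fun t ht =>
    (convex_Ici a).mul_sub_le_image_sub_of_le_deriv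
      (fun x hx => (hu x hx).continuousAt.continuousWithinAt)
      (fun x hx => (hu x (interior_subset hx)).differentiableAt.differentiableWithinAt)
      (fun x hx => (hu x (interior_subset hx)).deriv ▸ hle x (interior_subset hx))
      a self_mem_Ici t ht ht
  set t := a + (|B - u a| + 1) / c
  have hta : a ≤ t := le_add_of_nonneg_right (by positivity)
  refine ⟨t, hta, ?_⟩
  have h := hgrowth t hta
  rw [show t - a = (|B - u a| + 1) / c by ring, mul_div_cancel₀ _ hc.ne'] at h
  linarith [le_abs_self (B - u a)]

theorem eventually_pos_of_hasDerivAt_pos {u : ℝ → ℝ} {a c : ℝ} (hu : HasDerivAt u c a)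
    (hc : 0 < c) (ha : u a = 0) : ∀ᶠ t in 𝓝[>] a, 0 < u t := by
  have hslope := (hasDerivAt_iff_tendsto_slope.1 hu).mono_left
    (nhdsWithin_mono a fun t (ht : a < t) => ht.ne')
  filter_upwards [hslope.eventually (lt_mem_nhds hc), self_mem_nhdsWithin] with t ht hta
  rw [slope_def_field, ha, sub_zero] at ht
  exact (div_pos_iff_of_pos_right (sub_pos.2 hta)).1 ht

theorem exists_first_zero {u : ℝ → ℝ} (hu : Continuous u) {a T : ℝ}
    (hpos : ∀ᶠ t in 𝓝[>] a, 0 < u t) (haT : a < T) (huT : u T ≤ 0) :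
    ∃ t₂ > a, u t₂ = 0 ∧ ∀ t ∈ Ioo a t₂, 0 < u t := by
  obtain ⟨ε, hε, hεpos⟩ := mem_nhdsGT_iff_exists_Ioo_subset.1 hpos
  set S := Ici ε ∩ u ⁻¹' Iic 0
  have hTS : T ∈ S := ⟨not_lt.1 fun h => (hεpos ⟨haT, h⟩ : 0 < u T).not_ge huT, huT⟩
  have hbdd : BddBelow S := ⟨ε, fun _ h => h.1⟩
  have ht₂S : sInf S ∈ S :=
    (isClosed_Ici.inter (isClosed_Iic.preimage hu)).csInf_mem ⟨T, hTS⟩ hbdd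
  have hpos₂ : ∀ t ∈ Ioo a (sInf S), 0 < u t := fun t ht => by
    rcases lt_or_ge t ε with h | h
    · exact hεpos ⟨ht.1, h⟩
    · exact not_le.1 fun hu0 => (csInf_le hbdd ⟨h, hu0⟩).not_gt ht.2
  have hat₂ : a < sInf S := hε.out.trans_le ht₂S.1
  refine ⟨sInf S, hat₂, le_antisymm ht₂S.2 ?_, hpos₂⟩
  exact ge_of_tendsto ((hu.tendsto _).mono_left nhdsWithin_le_nhds)
    (eventually_of_mem (Ioo_mem_nhdsLT hat₂) fun t ht => (hpos₂ t ht).le)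

theorem exists_pos_deriv_nonpos {y y' g : ℝ → ℝ} {m z M : ℝ}
    (hy : ∀ t, HasDerivAt y (y' t) t) (hy' : ∀ t, HasDerivAt y' (g (y t)) t)
    (hbox : ∀ t, y t ∈ Icc m M) (hg_pos : ∀ s ∈ Ico m z, 0 < g s)
    (hg_neg : ∀ c ∈ Ioc z M, ∃ k > 0, ∀ s ∈ Icc c M, g s ≤ -k) :
    ∃ T > 0, y' T ≤ 0 := by
  -- If `y'` stayed positive, `y` would increase; below `z` its speed increases, which would carry
  -- it past `M`, and above `z` its acceleration is at most `-k`, which makes `y'` negative.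
  by_contra! hpos
  have hmono : StrictMonoOn y (Ici 0) :=
    strictMonoOn_of_hasDerivWithinAt_pos (convex_Ici 0)
      (fun t _ => (hy t).continuousAt.continuousWithinAt) (fun t _ => (hy t).hasDerivWithinAt)
      (fun t ht => hpos t (by simpa using ht))
  obtain ⟨t₁, ht₁, hzt₁⟩ : ∃ t₁ > 0, z < y t₁ := by
    by_contra! hle
    have hlt : ∀ t ≥ 1, y t < z := fun t ht =>
      (hmono (mem_Ici.2 (by linarith)) (mem_Ici.2 (by linarith)) (lt_add_one t)).trans_le
        (hle _ (by linarith))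
    have hy'mono : MonotoneOn y' (Ici 1) :=
      monotoneOn_of_hasDerivWithinAt_nonneg (convex_Ici 1)
        (fun t _ => (hy' t).continuousAt.continuousWithinAt) (fun t _ => (hy' t).hasDerivWithinAt)
        (fun t ht => (hg_pos _ ⟨(hbox t).1, hlt t (interior_subset ht)⟩).le)
    obtain ⟨t, -, ht⟩ := exists_gt_of_pos_le_deriv (hpos 1 one_pos) (fun t _ => hy t)
      (fun t ht => hy'mono self_mem_Ici ht ht) M
    exact ht.not_ge (hbox t).2
  obtain ⟨k, hk, hgk⟩ := hg_neg (y t₁) ⟨hzt₁, (hbox t₁).2⟩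
  obtain ⟨t, ht, hy't⟩ := exists_gt_of_pos_le_deriv hk (fun t _ => (hy' t).neg)
    (fun t ht => le_neg.2 (hgk _ ⟨hmono.monotoneOn ht₁.le (ht₁.le.trans ht) ht, (hbox t).2⟩)) 0
  exact (hpos t (ht₁.trans_le ht)).not_gt (neg_pos.1 hy't)

theorem exists_pos_deriv_eq_zero_strictMonoOn {y y' g : ℝ → ℝ} {m z M : ℝ} (hmz : m < z)
    (hy : ∀ t, HasDerivAt y (y' t) t) (hy' : ∀ t, HasDerivAt y' (g (y t)) t)
    (hbox : ∀ t, y t ∈ Icc m M) (hg_pos : ∀ s ∈ Ico m z, 0 < g s)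
    (hg_neg : ∀ c ∈ Ioc z M, ∃ k > 0, ∀ s ∈ Icc c M, g s ≤ -k) (hy0 : y 0 = m) (hy'0 : y' 0 = 0) :
    ∃ t₂ > 0, y' t₂ = 0 ∧ StrictMonoOn y (Icc 0 t₂) := by
  obtain ⟨T, hT, hT'⟩ := exists_pos_deriv_nonpos hy hy' hbox hg_pos hg_neg
  have hstart : ∀ᶠ t in 𝓝[>] 0, 0 < y' t :=
    eventually_pos_of_hasDerivAt_pos (hy' 0) (hy0 ▸ hg_pos m ⟨le_rfl, hmz⟩) hy'0
  obtain ⟨t₂, ht₂, hy't₂, hpos⟩ := exists_first_zero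
    (continuous_iff_continuousAt.2 fun t => (hy' t).continuousAt) hstart hT hT'
  exact ⟨t₂, ht₂, hy't₂, strictMonoOn_of_hasDerivWithinAt_pos (convex_Icc 0 t₂)
    (fun t _ => (hy t).continuousAt.continuousWithinAt) (fun t _ => (hy t).hasDerivWithinAt)
    (fun t ht => hpos t (by simpa using ht))⟩

theorem exists_lipschitzOnWith_Icc {g g' : ℝ → ℝ} {a b : ℝ}
    (hg : ∀ x ∈ Icc a b, HasDerivAt g (g' x) x) (hg' : ContinuousOn g' (Icc a b)) :
    ∃ K, LipschitzOnWith K g (Icc a b) := by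
  obtain ⟨C, hC⟩ := isCompact_Icc.exists_bound_of_continuousOn hg'
  refine ⟨C.toNNReal, (convex_Icc a b).lipschitzOnWith_of_nnnorm_hasDerivWithin_le
    (fun x hx => (hg x hx).hasDerivWithinAt) fun x hx => ?_⟩
  rw [← NNReal.coe_le_coe, coe_nnnorm, Real.coe_toNNReal']
  exact le_max_of_le_left (hC x hx)

theorem mem_Icc_of_le_of_strictMonoOn_of_strictAntiOn {Φ : ℝ → ℝ} {a z b m M : ℝ}
    (hmono : StrictMonoOn Φ (Ioc a z)) (hanti : StrictAntiOn Φ (Ico z b))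
    (hm : m ∈ Ioc a z) (hM : M ∈ Ico z b) (hmM : Φ M = Φ m) {s : ℝ} (hs : s ∈ Ioo a b)
    (hle : Φ m ≤ Φ s) : s ∈ Icc m M := by
  refine ⟨not_lt.1 fun hsm => ?_, not_lt.1 fun hMs => ?_⟩
  · exact (hmono ⟨hs.1, hsm.le.trans hm.2⟩ hm hsm).not_ge hle
  · exact (hanti hM ⟨hM.1.trans hMs.le, hs.2⟩ hMs).not_ge (hmM ▸ hle)

theorem lt_of_mem_Ioo_of_strictMonoOn_of_strictAntiOn {Φ : ℝ → ℝ} {a z b m M : ℝ}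
    (hmono : StrictMonoOn Φ (Ioc a z)) (hanti : StrictAntiOn Φ (Ico z b))
    (hm : m ∈ Ioc a z) (hM : M ∈ Ico z b) (hmM : Φ M = Φ m) {s : ℝ} (hs : s ∈ Ioo m M) :
    Φ m < Φ s := by
  rcases le_or_gt s z with hsz | hzs
  · exact hmono hm ⟨hm.1.trans hs.1, hsz⟩ hs.1
  · exact hmM ▸ hanti ⟨hzs.le, hs.2.trans hM.2⟩ hM hs.2

theorem exists_mem_Ioo_eq_of_tendsto_nhdsLT {Φ : ℝ → ℝ} {z b c L : ℝ} (hzb : z < b)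
    (hΦ : ContinuousOn Φ (Ico z b)) (hlim : Tendsto Φ (𝓝[<] b) (𝓝 L)) (hLc : L < c)
    (hcz : c < Φ z) : ∃ M ∈ Ioo z b, Φ M = c := by
  obtain ⟨s, hsc, hs⟩ := ((hlim.eventually (gt_mem_nhds hLc)).and (Ioo_mem_nhdsLT hzb)).exists
  obtain ⟨M, hM, hΦM⟩ := intermediate_value_Icc' hs.1.le (hΦ.mono (Icc_subset_Ico_right hs.2))
    ⟨hsc.le, hcz.le⟩
  exact ⟨M, ⟨hM.1.lt_of_ne (by rintro rfl; exact hcz.ne' hΦM), hM.2.trans_lt hs.2⟩, hΦM⟩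

noncomputable def force (f f' : ℝ → ℝ) (α s : ℝ) : ℝ :=
  (1 - s) / 4 * ((2 * α) ^ 2 * f' s / ((1 - s) * f s ^ 3) - 1)

/-- The paper's first integral `(1-s)² - (2α)²/f(s)²`, scaled so that its derivative is
`2 * force f f' α`. -/
noncomputable def potential (f : ℝ → ℝ) (α s : ℝ) : ℝ :=
  ((1 - s) ^ 2 - (2 * α) ^ 2 / f s ^ 2) / 4

section

variable {f f' : ℝ → ℝ}

theorem strictAntiOn_deriv_div_one_sub_mul_pow_three
    (hf : ∀ s ∈ Ioo (0:ℝ) 1, HasDerivAt f (f' s) s) (hfpos : ∀ s ∈ Ioo (0:ℝ) 1, 0 < f s)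
    (hf3 : ∀ s ∈ Ioo (0:ℝ) 1, 0 < (1 - s) * f' s - f s)
    (hf4 : ∀ s ∈ Ioo (0:ℝ) 1, deriv (fun t => (1 - t) * f' t / f t) s < 0) :
    StrictAntiOn (fun s => f' s / ((1 - s) * f s ^ 3)) (Ioo 0 1) := by
  have hP : ∀ s ∈ Ioo (0:ℝ) 1, HasDerivAt (fun t => (1 - t) * f t) ((1 - s) * f' s - f s) s :=
    fun s hs => (((hasDerivAt_id s).const_sub 1).mul (hf s hs)).congr_deriv (by simp only [id]; ring)
  have hPmono : StrictMonoOn (fun t => (1 - t) * f t) (Ioo 0 1) :=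
    strictMonoOn_of_hasDerivWithinAt_pos (convex_Ioo 0 1)
      (fun s hs => (hP s hs).continuousAt.continuousWithinAt)
      (fun s hs => (hP s (interior_subset hs)).hasDerivWithinAt)
      (fun s hs => hf3 s (interior_subset hs))
  have hNanti : StrictAntiOn (fun t => (1 - t) * f' t / f t) (Ioo 0 1) :=
    strictAntiOn_of_deriv_neg (convex_Ioo 0 1)
      (fun s hs =>
        (differentiableAt_of_deriv_ne_zero (hf4 s hs).ne).continuousAt.continuousWithinAt)
      (fun s hs => hf4 s (interior_subset hs))
  -- the quotient of the decreasing positive `(1-s) f'/f` by the square of the increasing positive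
  -- `(1-s) f`
  have hsplit : ∀ s ∈ Ioo (0:ℝ) 1,
      f' s / ((1 - s) * f s ^ 3) = ((1 - s) * f' s / f s) / ((1 - s) * f s) ^ 2 := fun s hs => by
    have : 1 - s ≠ 0 := sub_ne_zero.2 hs.2.ne'
    have := (hfpos s hs).ne'
    field_simp
  intro a ha b hb hab
  have hPa : 0 < (1 - a) * f a := mul_pos (sub_pos.2 ha.2) (hfpos a ha)
  have hNb : 0 < (1 - b) * f' b / f b := div_pos (by linarith [hf3 b hb, hfpos b hb]) (hfpos b hb)
  simp only [hsplit a ha, hsplit b hb]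
  calc (1 - b) * f' b / f b / ((1 - b) * f b) ^ 2
      < (1 - a) * f' a / f a / ((1 - b) * f b) ^ 2 :=
        div_lt_div_of_pos_right (hNanti ha hb hab) (pow_pos (hPa.trans (hPmono ha hb hab)) 2)
    _ < (1 - a) * f' a / f a / ((1 - a) * f a) ^ 2 :=
        div_lt_div_of_pos_left (hNb.trans (hNanti ha hb hab)) (pow_pos hPa 2)
          (pow_lt_pow_left₀ (hPmono ha hb hab) hPa.le two_ne_zero)

theorem force_eq {α z : ℝ} (hα : α ≠ 0)
    (hz : f' z / ((1 - z) * f z ^ 3) = 1 / (2 * α) ^ 2) (s : ℝ) :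
    force f f' α s = (1 - s) / 4 * (2 * α) ^ 2 *
      (f' s / ((1 - s) * f s ^ 3) - f' z / ((1 - z) * f z ^ 3)) := by
  rw [hz, force]
  field_simp

theorem force_pos {α z s : ℝ} (hα : α ≠ 0)
    (hanti : StrictAntiOn (fun s => f' s / ((1 - s) * f s ^ 3)) (Ioo 0 1)) (hz : z ∈ Ioo (0:ℝ) 1)
    (hzdef : f' z / ((1 - z) * f z ^ 3) = 1 / (2 * α) ^ 2) (hs : s ∈ Ioo 0 z) :
    0 < force f f' α s := by
  have h1 : 0 < 1 - s := by linarith [hs.2, hz.2]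
  rw [force_eq hα hzdef]
  exact mul_pos (by positivity) (sub_pos.2 (hanti ⟨hs.1, hs.2.trans hz.2⟩ hz hs.2))

theorem force_neg {α z s : ℝ} (hα : α ≠ 0)
    (hanti : StrictAntiOn (fun s => f' s / ((1 - s) * f s ^ 3)) (Ioo 0 1)) (hz : z ∈ Ioo (0:ℝ) 1)
    (hzdef : f' z / ((1 - z) * f z ^ 3) = 1 / (2 * α) ^ 2) (hs : s ∈ Ioo z 1) :
    force f f' α s < 0 := by
  have h1 : 0 < 1 - s := sub_pos.2 hs.2
  rw [force_eq hα hzdef]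
  exact mul_neg_of_pos_of_neg (by positivity) (sub_neg.2 (hanti hz ⟨hz.1.trans hs.1, hs.2⟩ hs.1))

theorem exists_pos_forall_force_le_neg {α z c M : ℝ} (hα : α ≠ 0)
    (hanti : StrictAntiOn (fun s => f' s / ((1 - s) * f s ^ 3)) (Ioo 0 1)) (hz : z ∈ Ioo (0:ℝ) 1)
    (hzdef : f' z / ((1 - z) * f z ^ 3) = 1 / (2 * α) ^ 2) (hc : c ∈ Ioc z M) (hM : M < 1) :
    ∃ k > 0, ∀ s ∈ Icc c M, force f f' α s ≤ -k := by
  set h := fun s => f' s / ((1 - s) * f s ^ 3)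
  have hc' : c ∈ Ioo (0:ℝ) 1 := ⟨hz.1.trans hc.1, hc.2.trans_lt hM⟩
  have hzc : h c < h z := hanti hz hc' hc.1
  refine ⟨(1 - M) / 4 * (2 * α) ^ 2 * (h z - h c), mul_pos (by
    have : 0 < 1 - M := sub_pos.2 hM
    positivity) (sub_pos.2 hzc), fun s hs => ?_⟩
  have hs' : s ∈ Ioo (0:ℝ) 1 := ⟨hc'.1.trans_le hs.1, hs.2.trans_lt hM⟩
  have hsc : h s ≤ h c := hanti.antitoneOn hc' hs' hs.1
  rw [force_eq hα hzdef]
  have : (1 - s) * (h s - h z) ≤ (1 - M) * (h c - h z) := by nlinarith [hs.2]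
  nlinarith [sq_nonneg (2 * α)]

theorem hasDerivAt_force {f'' : ℝ → ℝ} {α s : ℝ} (hf : HasDerivAt f (f' s) s)
    (hf' : HasDerivAt f' (f'' s) s) (hfs : f s ≠ 0) (hs : s ≠ 1) :
    HasDerivAt (force f f' α) (α ^ 2 * (f'' s * f s - 3 * f' s ^ 2) / f s ^ 4 + 1 / 4) s := by
  have heq : (fun u => α ^ 2 * (f' u / f u ^ 3) - (1 - u) / 4) =ᶠ[𝓝 s] force f f' α := by
    filter_upwards [eventually_ne_nhds hs, hf.continuousAt.eventually_ne hfs] with u hu hfu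
    have : 1 - u ≠ 0 := sub_ne_zero.2 hu.symm
    unfold force
    field_simp
    ring
  refine (((hf'.div (hf.pow 3) (pow_ne_zero 3 hfs)).const_mul (α ^ 2)).sub
    (((hasDerivAt_id s).const_sub 1).div_const 4)).congr_of_eventuallyEq heq.symm
    |>.congr_deriv ?_
  simp only [Pi.pow_apply]
  field_simp
  ring

theorem exists_lipschitzOnWith_force {f'' : ℝ → ℝ} {α a b : ℝ}
    (hf : ∀ s ∈ Ioo (0:ℝ) 1, HasDerivAt f (f' s) s)
    (hf' : ∀ s ∈ Ioo (0:ℝ) 1, HasDerivAt f' (f'' s) s) (hf'' : ContinuousOn f'' (Ioo 0 1))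
    (hfpos : ∀ s ∈ Ioo (0:ℝ) 1, 0 < f s) (hab : Icc a b ⊆ Ioo 0 1) :
    ∃ K, LipschitzOnWith K (force f f' α) (Icc a b) := by
  refine exists_lipschitzOnWith_Icc
    (fun s hs => hasDerivAt_force (hf s (hab hs)) (hf' s (hab hs)) (hfpos s (hab hs)).ne'
      (hab hs).2.ne) ?_
  have hfc : ContinuousOn f (Icc a b) := fun s hs => (hf s (hab hs)).continuousAt.continuousWithinAt
  have hf'c : ContinuousOn f' (Icc a b) :=
    fun s hs => (hf' s (hab hs)).continuousAt.continuousWithinAt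
  exact ((continuousOn_const.mul ((hf''.mono hab).mul hfc |>.sub
    (continuousOn_const.mul (hf'c.pow 2)))).div (hfc.pow 4)
    fun s hs => pow_ne_zero 4 (hfpos s (hab hs)).ne').add continuousOn_const

theorem hasDerivAt_potential {α s : ℝ} (hf : HasDerivAt f (f' s) s) (hfs : f s ≠ 0)
    (hs : s ≠ 1) : HasDerivAt (potential f α) (2 * force f f' α s) s := by
  have h1 : 1 - s ≠ 0 := sub_ne_zero.2 hs.symm
  refine ((((hasDerivAt_id s).const_sub 1).pow 2).sub
    ((hasDerivAt_const s ((2 * α) ^ 2)).div (hf.pow 2) (pow_ne_zero 2 hfs))).div_const 4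
    |>.congr_deriv ?_
  simp only [force, id, Pi.pow_apply]
  field_simp
  ring

theorem potential_pos {α m : ℝ} (hα : 0 ≤ α) (hfm : 0 < f m) (hm : 2 * α < (1 - m) * f m) :
    0 < potential f α m := by
  have : (2 * α) ^ 2 < ((1 - m) * f m) ^ 2 := pow_lt_pow_left₀ hm (by positivity) two_ne_zero
  have : (2 * α) ^ 2 / f m ^ 2 < (1 - m) ^ 2 := by
    rw [div_lt_iff₀ (by positivity)]; linarith
  unfold potential; linarith

theorem tendsto_potential_nhdsLT_one {α σ : ℝ}
    (hf : Tendsto (fun s => (1 - s) * f s) (𝓝[<] 1) (𝓝 σ)) (hσ : σ ≠ 0) :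
    Tendsto (potential f α) (𝓝[<] 1) (𝓝 0) := by
  have hlim : Tendsto (fun s : ℝ => (1 - s) ^ 2 * (1 - (2 * α) ^ 2 / ((1 - s) * f s) ^ 2) / 4)
      (𝓝[<] 1) (𝓝 ((1 - 1) ^ 2 * (1 - (2 * α) ^ 2 / σ ^ 2) / 4)) :=
    ((((continuous_const.sub continuous_id).pow 2).tendsto 1).mono_left nhdsWithin_le_nhds
      |>.mul (tendsto_const_nhds.sub (tendsto_const_nhds.div (hf.pow 2) (pow_ne_zero 2 hσ))))
      |>.div_const 4
  rw [sub_self, zero_pow two_ne_zero, zero_mul, zero_div] at hlim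
  refine hlim.congr' ?_
  filter_upwards [hf.eventually_ne hσ] with s hs
  have h1 : 1 - s ≠ 0 := left_ne_zero_of_mul hs
  have h2 : f s ≠ 0 := right_ne_zero_of_mul hs
  unfold potential
  field_simp

theorem exists_mem_Ioo_potential_superlevel {α σ z m : ℝ}
    (hf : ∀ s ∈ Ioo (0:ℝ) 1, HasDerivAt f (f' s) s) (hfpos : ∀ s ∈ Ioo (0:ℝ) 1, 0 < f s)
    (hf2 : Tendsto (fun s => (1 - s) * f s) (𝓝[<] 1) (𝓝 σ)) (hσ : σ ≠ 0) (hα : 0 < α)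
    (hanti : StrictAntiOn (fun s => f' s / ((1 - s) * f s ^ 3)) (Ioo 0 1))
    (hz : z ∈ Ioo (0:ℝ) 1) (hzdef : f' z / ((1 - z) * f z ^ 3) = 1 / (2 * α) ^ 2)
    (hm : m ∈ Ioo 0 z) (hcase : 2 * α < (1 - m) * f m) :
    ∃ M ∈ Ioo z 1, (∀ s ∈ Ioo 0 1, potential f α m ≤ potential f α s → s ∈ Icc m M) ∧
      ∀ s ∈ Ioo m M, potential f α m < potential f α s := by
  have hΦ : ∀ s ∈ Ioo (0:ℝ) 1, HasDerivAt (potential f α) (2 * force f f' α s) s :=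
    fun s hs => hasDerivAt_potential (hf s hs) (hfpos s hs).ne' hs.2.ne
  have hmono : StrictMonoOn (potential f α) (Ioc 0 z) :=
    strictMonoOn_of_hasDerivWithinAt_pos (convex_Ioc 0 z)
      (fun s hs => (hΦ s ⟨hs.1, hs.2.trans_lt hz.2⟩).continuousAt.continuousWithinAt)
      (fun s hs => (hΦ s ⟨(interior_subset hs : s ∈ Ioc 0 z).1,
        (interior_subset hs : s ∈ Ioc 0 z).2.trans_lt hz.2⟩).hasDerivWithinAt)
      (fun s hs => mul_pos two_pos (force_pos hα.ne' hanti hz hzdef (by simpa using hs)))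
  have hanti' : StrictAntiOn (potential f α) (Ico z 1) :=
    strictAntiOn_of_hasDerivWithinAt_neg (convex_Ico z 1)
      (fun s hs => (hΦ s ⟨hz.1.trans_le hs.1, hs.2⟩).continuousAt.continuousWithinAt)
      (fun s hs => (hΦ s ⟨hz.1.trans_le (interior_subset hs : s ∈ Ico z 1).1,
        (interior_subset hs : s ∈ Ico z 1).2⟩).hasDerivWithinAt)
      (fun s hs => mul_neg_of_pos_of_neg two_pos
        (force_neg hα.ne' hanti hz hzdef (by simpa using hs)))
  obtain ⟨M, hM, hΦM⟩ := exists_mem_Ioo_eq_of_tendsto_nhdsLT hz.2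
    (fun s hs => (hΦ s ⟨hz.1.trans_le hs.1, hs.2⟩).continuousAt.continuousWithinAt)
    (tendsto_potential_nhdsLT_one hf2 hσ)
    (potential_pos hα.le (hfpos m ⟨hm.1, hm.2.trans hz.2⟩) hcase)
    (hmono ⟨hm.1, hm.2.le⟩ ⟨hz.1, le_rfl⟩ hm.2)
  have hm' : m ∈ Ioc 0 z := ⟨hm.1, hm.2.le⟩
  have hM' : M ∈ Ico z 1 := ⟨hM.1.le, hM.2⟩
  exact ⟨M, hM,
    fun s hs => mem_Icc_of_le_of_strictMonoOn_of_strictAntiOn hmono hanti' hm' hM' hΦM hs,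
    fun s hs => lt_of_mem_Ioo_of_strictMonoOn_of_strictAntiOn hmono hanti' hm' hM' hΦM hs⟩

end

theorem stmt7_general (f f' f'' : ℝ → ℝ) (σc α m z : ℝ)
    (hf_nonneg : ∀ s ∈ Ico (0:ℝ) 1, 0 ≤ f s)
    (hf_zero : ∀ s ∈ Ico (0:ℝ) 1, (f s = 0 ↔ s = 0))
    (hd1 : ∀ s ∈ Ioo (0:ℝ) 1, HasDerivAt f (f' s) s)
    (hd2 : ∀ s ∈ Ioo (0:ℝ) 1, HasDerivAt f' (f'' s) s)
    (hc2 : ContinuousOn f'' (Ioo 0 1))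
    (hf3 : ∀ s ∈ Ioo (0:ℝ) 1, 0 < (1 - s) * f' s - f s)
    (hf2 : Tendsto (fun s => (1 - s) * f s) (nhdsWithin 1 (Iio 1)) (nhds σc))
    (hf4 : ∀ s ∈ Ioo (0:ℝ) 1, deriv (fun t => (1 - t) * f' t / f t) s < 0)
    (hα : α ∈ Ioo (0:ℝ) (σc / 2))
    (hz : z ∈ Ioo (0:ℝ) 1)
    (hzdef : f' z / ((1 - z) * (f z) ^ 3) = 1 / (2 * α) ^ 2)
    (hm : m ∈ Ioo (0:ℝ) z)
    (hcase : 2 * α < (1 - m) * f m)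
    (y y' : ℝ → ℝ)
    (hy : ∀ t : ℝ, HasDerivAt y (y' t) t)
    (hy' : ∀ t : ℝ, HasDerivAt y'
      (if y t < 1 then
        (1 - y t) / 4 * ((2 * α) ^ 2 * f' (y t) / ((1 - y t) * (f (y t)) ^ 3) - 1)
      else 0) t)
    (hy0 : y 0 = m) (hy'0 : y' 0 = 0) :
    ∃ t₂ : ℝ, 0 < t₂ ∧ ∃ M ∈ Ioo z 1,
      StrictMonoOn y (Icc 0 t₂) ∧ y t₂ = M ∧ (∀ t : ℝ, y t ≤ M) ∧
      ∀ t : ℝ, y (t + 2 * t₂) = y t := by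
  have hfpos : ∀ s ∈ Ioo (0:ℝ) 1, 0 < f s := fun s hs =>
    (hf_nonneg s ⟨hs.1.le, hs.2⟩).lt_of_ne' fun h => hs.1.ne' ((hf_zero s ⟨hs.1.le, hs.2⟩).1 h)
  have hanti := strictAntiOn_deriv_div_one_sub_mul_pow_three hd1 hfpos hf3 hf4
  obtain ⟨M, hM, hsuper, hlevel⟩ := exists_mem_Ioo_potential_superlevel hd1 hfpos hf2
    (by linarith [hα.1, hα.2]) hα.1 hanti hz hzdef hm hcase
  have hmM : Icc m M ⊆ Ioo 0 1 := fun s hs => ⟨hm.1.trans_le hs.1, hs.2.trans_lt hM.2⟩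
  have hforce : ∀ t, y t < 1 → HasDerivAt y' (force f f' α (y t)) t := fun t ht => by
    have h := hy' t
    rwa [if_pos ht] at h
  have htrap := mem_and_sq_eq_of_superlevel_subset isOpen_Ioo isClosed_Icc hmM
    (fun s hs => hasDerivAt_potential (hd1 s hs) (hfpos s hs).ne' hs.2.ne)
    ⟨hm.1, hm.2.trans hz.2⟩ hsuper hy (fun t ht => hforce t ht.2) hy0 hy'0
  have hy'' : ∀ t, HasDerivAt y' (force f f' α (y t)) t := fun t => hforce t (hmM (htrap t).1).2
  obtain ⟨t₂, ht₂, hy't₂, hmono⟩ := exists_pos_deriv_eq_zero_strictMonoOn hm.2 hy hy''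
    (fun t => (htrap t).1)
    (fun s hs => force_pos hα.1.ne' hanti hz hzdef ⟨hm.1.trans_le hs.1, hs.2⟩)
    (fun c hc => exists_pos_forall_force_le_neg hα.1.ne' hanti hz hzdef hc hM.2) hy0 hy'0
  have hyt₂ : y t₂ = M := by
    by_contra hne
    have hmy : m < y t₂ := hy0 ▸ hmono (left_mem_Icc.2 ht₂.le) (right_mem_Icc.2 ht₂.le) ht₂
    have henergy := (htrap t₂).2
    rw [hy't₂, sq, zero_mul] at henergy
    linarith [hlevel (y t₂) ⟨hmy, (htrap t₂).1.2.lt_of_ne hne⟩]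
  obtain ⟨K, hK⟩ := exists_lipschitzOnWith_force (α := α) hd1 hd2 hc2 hfpos hmM
  have hsym : ∀ t₀, y' t₀ = 0 → ∀ t, y (2 * t₀ - t) = y t :=
    fun _ => apply_two_mul_sub_eq_of_deriv_eq_zero hK hy hy'' fun t => (htrap t).1
  refine ⟨t₂, ht₂, M, hM, hmono, hyt₂, fun t => (htrap t).1.2, fun t => ?_⟩
  calc y (t + 2 * t₂) = y (2 * t₂ - -t) := by ring_nf
    _ = y (-t) := hsym t₂ hy't₂ (-t)
    _ = y (2 * 0 - t) := by ring_nf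
    _ = y t := hsym 0 hy'0 t

/-- Case (iii) of the ODE analysis: if `(1-m)f(m) > 2α` with `m ∈ (0, z_α)`, the solution of
`y'' = ((1-y)/4)[(2α)²f'(y)/((1-y)f(y)³) - 1]`, `y(0)=m`, `y'(0)=0` is periodic: there is
`t₂ > 0` such that `y` is strictly increasing on `[0,t₂]`, attains its maximum
`M ∈ (z_α, 1)` at `t₂`, and `y(t + 2t₂) = y(t)` for all `t`. -/
theorem stmt7 (f f' f'' : ℝ → ℝ) (σc α m z : ℝ) (hσ : 0 < σc)
    (hf_nonneg : ∀ s ∈ Ico (0:ℝ) 1, 0 ≤ f s)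
    (hf_zero : ∀ s ∈ Ico (0:ℝ) 1, (f s = 0 ↔ s = 0))
    (hc0 : ContinuousOn f (Ico 0 1))
    (hd1 : ∀ s ∈ Ioo (0:ℝ) 1, HasDerivAt f (f' s) s)
    (hd2 : ∀ s ∈ Ioo (0:ℝ) 1, HasDerivAt f' (f'' s) s)
    (hc2 : ContinuousOn f'' (Ioo 0 1))
    (hf3 : ∀ s ∈ Ioo (0:ℝ) 1, 0 < (1 - s) * f' s - f s)
    (hf2 : Tendsto (fun s => (1 - s) * f s) (nhdsWithin 1 (Iio 1)) (nhds σc))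
    (hf4 : ∀ s ∈ Ioo (0:ℝ) 1, deriv (fun t => (1 - t) * f' t / f t) s < 0)
    (hf5 : Tendsto (fun s => ((1 - s) * f' s - f s) / (1 - s) ^ 3)
      (nhdsWithin 1 (Iio 1)) atTop)
    (hα : α ∈ Ioo (0:ℝ) (σc / 2))
    (hz : z ∈ Ioo (0:ℝ) 1)
    (hzdef : f' z / ((1 - z) * (f z) ^ 3) = 1 / (2 * α) ^ 2)
    (hm : m ∈ Ioo (0:ℝ) z)
    (hcase : 2 * α < (1 - m) * f m)
    (y y' : ℝ → ℝ)
    (hy : ∀ t : ℝ, HasDerivAt y (y' t) t)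
    (hy' : ∀ t : ℝ, HasDerivAt y'
      (if y t < 1 then
        (1 - y t) / 4 * ((2 * α) ^ 2 * f' (y t) / ((1 - y t) * (f (y t)) ^ 3) - 1)
      else 0) t)
    (hy0 : y 0 = m) (hy'0 : y' 0 = 0) :
    ∃ t₂ : ℝ, 0 < t₂ ∧ ∃ M ∈ Ioo z 1,
      StrictMonoOn y (Icc 0 t₂) ∧ y t₂ = M ∧ (∀ t : ℝ, y t ≤ M) ∧
      ∀ t : ℝ, y (t + 2 * t₂) = y t :=
  stmt7_general f f' f'' σc α m z hf_nonneg hf_zero hd1 hd2 hc2 hf3 hf2 hf4 hα hz hzdef hm hcase y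
    y' hy hy' hy0 hy'0
end

section
/- For σ_c > 0 and q ∈ (0,2], the function f_q(s) = σ_c(1-(1-s)^q)/(1-s) satisfies that s ↦ (1-s)f_q'(s)/f_q(s) is strictly decreasing on (0,1). -/
open Set Filter

/-- For `σ_c > 0` and `q ∈ (0,2]`, the function `f_q(s) = σ_c(1-(1-s)^q)/(1-s)` satisfies
that `s ↦ (1-s)f_q'(s)/f_q(s)` is strictly decreasing on `(0,1)`. -/
theorem stmt9 (σc q : ℝ) (hσ : 0 < σc) (hq : q ∈ Ioc (0:ℝ) 2)
    (fq : ℝ → ℝ) (hfq : ∀ s, fq s = σc * (1 - (1 - s) ^ q) / (1 - s)) :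
    StrictAntiOn (fun s => (1 - s) * deriv fq s / fq s) (Ioo 0 1) := by
  have key : ∀ s ∈ Ioo (0:ℝ) 1,
      (1 - s) * deriv fq s / fq s
        = (1 + (q - 1) * (1 - s) ^ q) / (1 - (1 - s) ^ q) := by
    intro s hs
    have hu : (0:ℝ) < 1 - s := by linarith [hs.2]
    have hu1 : 1 - s < 1 := by linarith [hs.1]
    have hune : (1:ℝ) - s ≠ 0 := ne_of_gt hu
    have htq : (1 - s) ^ q < 1 := Real.rpow_lt_one (le_of_lt hu) hu1 hq.1
    have htq0 : 0 < (1 - s) ^ q := Real.rpow_pos_of_pos hu q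
    have hd1 : HasDerivAt (fun x : ℝ => 1 - x) (-1) s := by
      simpa using (hasDerivAt_id s).const_sub 1
    have hd2 : HasDerivAt (fun x : ℝ => (1 - x) ^ q)
        (q * (1 - s) ^ (q - 1) * (-1)) s :=
      (Real.hasDerivAt_rpow_const (Or.inl hune)).comp s hd1
    have hd3 : HasDerivAt (fun x : ℝ => σc * (1 - (1 - x) ^ q) / (1 - x))
        ((σc * (-(q * (1 - s) ^ (q - 1) * (-1))) * (1 - s)
          - σc * (1 - (1 - s) ^ q) * (-1)) / (1 - s) ^ 2) s :=
      (((hd2.const_sub 1).const_mul σc).div hd1 hune)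
    have hfq' : fq = fun x => σc * (1 - (1 - x) ^ q) / (1 - x) := funext hfq
    rw [hfq', hd3.deriv]
    have hpow : (1 - s) ^ (q - 1) = (1 - s) ^ q / (1 - s) :=
      Real.rpow_sub_one hune q
    have hne2 : (1:ℝ) - (1 - s) ^ q ≠ 0 := by linarith
    rw [hpow]
    field_simp
    ring
  intro a ha b hb hab
  simp only
  rw [key a ha, key b hb]
  have hua : (0:ℝ) < 1 - a := by linarith [ha.2]
  have hub : (0:ℝ) < 1 - b := by linarith [hb.2]
  have hta : (1 - a) ^ q < 1 := Real.rpow_lt_one (le_of_lt hua) (by linarith [ha.1]) hq.1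
  have htb0 : 0 < (1 - b) ^ q := Real.rpow_pos_of_pos hub q
  have hlt : (1 - b) ^ q < (1 - a) ^ q :=
    Real.rpow_lt_rpow (le_of_lt hub) (by linarith) hq.1
  rw [div_lt_div_iff₀ (by linarith) (by linarith)]
  nlinarith [hq.1, hlt]
end

section
/- Let h : (0,∞) → ℝ be locally Lipschitz and let v : [0,L] → (0,∞) be a C² solution of v'' = h(v) with v(0) = v(L) = 1 and v not identically 1. Then v has exactly one interior critical point, located at L/2, which is a global minimum; v is decreasing on (0,L/2), increasing on (L/2,L), and v(x) = v(L-x) for all x, provided the constant function 1 also solves the equation (i.e. h(1) = 0). -/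
/-!
Written as the first-order system `(v, v')' = (v', h v)`, the equation has a vector field that is
locally Lipschitz on `{v > 0}`, so a solution is determined by `(v, v')` at any one point. Hence
`v` cannot reach its maximal value `1` inside `(0, L)` without being constant. At an interior
critical point `c`, the reflection `x ↦ v (2c - x)` is a solution with the same data at `c`, so `v`
is symmetric about `c`; for `c ≠ L/2` this symmetry carries the boundary value `1` into the
interior. So the interior minimum is the only critical point, it sits at `L/2`, and `v'` has
constant sign on each half of the interval.
-/

open Set Filter Topology

theorem ODE_solution_unique_of_locallyLipschitzOn {E : Type*} [NormedAddCommGroup E]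
    [NormedSpace ℝ E] {F : E → E} {s : Set E} (hF : LocallyLipschitzOn s F)
    {I : Set ℝ} (hI : IsOpen I) (hI' : IsPreconnected I) {f g : ℝ → E}
    (hf : ∀ t ∈ I, HasDerivAt f (F (f t)) t ∧ f t ∈ s)
    (hg : ∀ t ∈ I, HasDerivAt g (F (g t)) t ∧ g t ∈ s)
    {t₀ : ℝ} (ht₀ : t₀ ∈ I) (heq : f t₀ = g t₀) : EqOn f g I := by
  have hlocal : ∀ t ∈ I, f t = g t → f =ᶠ[𝓝 t] g := by
    intro t ht hfg
    obtain ⟨K, U, hU, hKU⟩ := hF (hf t ht).2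
    obtain ⟨V, hV, hVU⟩ := mem_nhdsWithin_iff_exists_mem_nhds_inter.1 hU
    have near : ∀ φ : ℝ → E, (∀ τ ∈ I, HasDerivAt φ (F (φ τ)) τ ∧ φ τ ∈ s) → V ∈ 𝓝 (φ t) →
        ∀ᶠ τ in 𝓝 t, HasDerivAt φ (F (φ τ)) τ ∧ φ τ ∈ U := by
      intro φ hφ hφV
      filter_upwards [hI.mem_nhds ht, (hφ t ht).1.continuousAt.preimage_mem_nhds hφV]
        with τ hτ hτV
      exact ⟨(hφ τ hτ).1, hVU ⟨hτV, (hφ τ hτ).2⟩⟩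
    exact ODE_solution_unique_of_eventually (v := fun _ ↦ F) (s := fun _ ↦ U)
      (.of_forall fun _ ↦ hKU) (near f hf hV) (near g hg (hfg ▸ hV)) hfg
  -- `{t | f t = g t}` is open by local uniqueness and relatively closed by continuity.
  intro t ht
  refine (hI'.induction₂ (fun x y ↦ (f x = g x ↔ f y = g y)) (fun x hx ↦ ?_)
    (fun _ _ _ _ _ _ ↦ Iff.trans) (fun _ _ _ _ ↦ Iff.symm) ht₀ ht).1 heq
  rw [hI.nhdsWithin_eq hx]
  by_cases hfg : f x = g x
  · filter_upwards [hlocal x hx hfg] with y hy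
    simp [hfg, hy]
  · filter_upwards [((hf x hx).1.continuousAt.sub (hg x hx).1.continuousAt).eventually_ne
      (sub_ne_zero.2 hfg)] with y hy
    simp [hfg, sub_ne_zero.1 hy]

theorem strictMonoOn_or_strictAntiOn_Icc_of_hasDerivAt_ne_zero {f f' : ℝ → ℝ} {a b : ℝ}
    (hf : ContinuousOn f (Icc a b)) (hf' : ∀ x ∈ Ioo a b, HasDerivAt f (f' x) x)
    (hne : ∀ x ∈ Ioo a b, f' x ≠ 0) : StrictMonoOn f (Icc a b) ∨ StrictAntiOn f (Icc a b) := by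
  rw [← interior_Icc] at hf' hne
  have hf'' : ∀ x ∈ interior (Icc a b), HasDerivWithinAt f (f' x) (interior (Icc a b)) x :=
    fun x hx ↦ (hf' x hx).hasDerivWithinAt
  rcases hasDerivWithinAt_forall_lt_or_forall_gt_of_forall_ne (convex_Icc a b).interior hf'' hne
    with hneg | hpos
  · exact .inr (strictAntiOn_of_hasDerivWithinAt_neg (convex_Icc a b) hf hf'' hneg)
  · exact .inl (strictMonoOn_of_hasDerivWithinAt_pos (convex_Icc a b) hf hf'' hpos)

theorem LocallyLipschitzOn.secondOrderField {E : Type*} [PseudoEMetricSpace E] {h : E → E}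
    {S : Set E} (hh : LocallyLipschitzOn S h) :
    LocallyLipschitzOn (Prod.fst ⁻¹' S) (fun p : E × E ↦ (p.2, h p.1)) := by
  intro p hp
  obtain ⟨K, U, hU, hKU⟩ := hh hp
  exact ⟨_, Prod.fst ⁻¹' U,
    continuous_fst.continuousWithinAt.tendsto_nhdsWithin (mapsTo_preimage _ _) hU,
    LipschitzWith.prod_snd.lipschitzOnWith.prodMk
      (hKU.comp LipschitzWith.prod_fst.lipschitzOnWith (mapsTo_preimage _ _))⟩

def SolvesOn (h : ℝ → ℝ) (I : Set ℝ) (v v' : ℝ → ℝ) : Prop :=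
  ∀ t ∈ I, HasDerivAt v (v' t) t ∧ HasDerivAt v' (h (v t)) t

theorem solvesOn_Ioo_of_hasDerivWithinAt_Icc {h v v' : ℝ → ℝ} {a b : ℝ}
    (hv : ∀ x ∈ Icc a b, HasDerivWithinAt v (v' x) (Icc a b) x)
    (hv' : ∀ x ∈ Icc a b, HasDerivWithinAt v' (h (v x)) (Icc a b) x) :
    SolvesOn h (Ioo a b) v v' := fun x hx ↦
  ⟨(hv x (Ioo_subset_Icc_self hx)).hasDerivAt (Icc_mem_nhds hx.1 hx.2),
    (hv' x (Ioo_subset_Icc_self hx)).hasDerivAt (Icc_mem_nhds hx.1 hx.2)⟩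

namespace SolvesOn

variable {h : ℝ → ℝ} {S I : Set ℝ} {v v' w w' : ℝ → ℝ}

theorem mono {J : Set ℝ} (hv : SolvesOn h I v v') (hJ : J ⊆ I) : SolvesOn h J v v' :=
  fun t ht ↦ hv t (hJ ht)

theorem const {c : ℝ} (hc : h c = 0) : SolvesOn h I (fun _ ↦ c) (fun _ ↦ 0) :=
  fun t _ ↦ ⟨hasDerivAt_const t c, by simpa [hc] using hasDerivAt_const t (0 : ℝ)⟩

theorem comp_const_sub (hv : SolvesOn h I v v') (T : ℝ) :
    SolvesOn h ((T - ·) ⁻¹' I) (fun t ↦ v (T - t)) (fun t ↦ -v' (T - t)) := fun t ht ↦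
  ⟨(hv _ ht).1.comp_const_sub T t, by simpa using ((hv _ ht).2.comp_const_sub T t).fun_neg⟩

theorem eqOn (hh : LocallyLipschitzOn S h) (hI : IsOpen I) (hI' : IsPreconnected I)
    (hv : SolvesOn h I v v') (hw : SolvesOn h I w w') (hvS : MapsTo v I S) (hwS : MapsTo w I S)
    {t₀ : ℝ} (ht₀ : t₀ ∈ I) (h₀ : v t₀ = w t₀) (h₁ : v' t₀ = w' t₀) : EqOn v w I :=
  fun _ ht ↦ congrArg Prod.fst <|
    ODE_solution_unique_of_locallyLipschitzOn hh.secondOrderField hI hI'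
      (f := fun t ↦ (v t, v' t)) (g := fun t ↦ (w t, w' t))
      (fun t ht ↦ ⟨(hv t ht).1.prodMk (hv t ht).2, hvS ht⟩)
      (fun t ht ↦ ⟨(hw t ht).1.prodMk (hw t ht).2, hwS ht⟩) ht₀ (Prod.ext h₀ h₁) ht

theorem lt_of_le_of_exists_ne (hh : LocallyLipschitzOn S h) (hI : IsOpen I)
    (hI' : IsPreconnected I) (hv : SolvesOn h I v v') (hvS : MapsTo v I S) {a : ℝ} (ha : h a = 0)
    (hle : ∀ x ∈ I, v x ≤ a) (hne : ∃ x ∈ I, v x ≠ a) {c : ℝ} (hc : c ∈ I) : v c < a := by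
  refine (hle c hc).lt_of_ne fun hca ↦ ?_
  have hmax : IsMaxOn v I c := fun x hx ↦ hca ▸ hle x hx
  have hc0 : v' c = 0 := (hmax.isLocalMax (hI.mem_nhds hc)).hasDerivAt_eq_zero (hv c hc).1
  obtain ⟨x, hx, hxa⟩ := hne
  exact hxa <| hv.eqOn hh hI hI' (const ha) hvS (fun _ _ ↦ hca ▸ hvS hc) hc hca hc0 hx

theorem eq_comp_const_sub_of_deriv_eq_zero (hh : LocallyLipschitzOn S h) {a b : ℝ}
    (hv : SolvesOn h (Ioo a b) v v') (hvS : MapsTo v (Ioo a b) S)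
    (hcont : ContinuousOn v (Icc a b)) {c : ℝ} (hc : c ∈ Ioo a b) (hc0 : v' c = 0) {x : ℝ}
    (hx : x ∈ Icc a b) (hx' : 2 * c - x ∈ Icc a b) : v x = v (2 * c - x) := by
  set J := Ioo a b ∩ (2 * c - ·) ⁻¹' Ioo a b
  have hJ : J = Ioo (max a (2 * c - b)) (min b (2 * c - a)) := by simp [J, Ioo_inter_Ioo]
  have hcJ : c ∈ J := ⟨hc, by simp only [mem_preimage, mem_Ioo]; constructor <;> linarith [hc.1, hc.2]⟩
  have heq : EqOn v (fun t ↦ v (2 * c - t)) J :=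
    (hv.mono inter_subset_left).eqOn hh (hJ ▸ isOpen_Ioo) (hJ ▸ isPreconnected_Ioo)
      ((hv.comp_const_sub _).mono inter_subset_right) (hvS.mono_left inter_subset_left)
      (fun t ht ↦ hvS ht.2) hcJ (by rw [two_mul, add_sub_cancel_right])
      (by rw [two_mul, add_sub_cancel_right, hc0, neg_zero])
  refine heq.of_subset_closure (t := Icc a b ∩ (2 * c - ·) ⁻¹' Icc a b)
    (hcont.mono inter_subset_left)
    (hcont.comp (continuous_const.sub continuous_id).continuousOn fun _ ht ↦ ht.2)
    (inter_subset_inter Ioo_subset_Icc_self (preimage_mono Ioo_subset_Icc_self)) ?_ ⟨hx, hx'⟩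
  rw [hJ, closure_Ioo ((hJ ▸ hcJ).1.trans (hJ ▸ hcJ).2).ne]
  simp [Icc_inter_Icc]

theorem eq_midpoint_of_deriv_eq_zero (hh : LocallyLipschitzOn S h) {a b : ℝ}
    (hv : SolvesOn h (Ioo a b) v v') (hvS : MapsTo v (Ioo a b) S)
    (hcont : ContinuousOn v (Icc a b)) (hab : v a = v b) (hne : ∀ x ∈ Ioo a b, v x ≠ v a)
    {c : ℝ} (hc : c ∈ Ioo a b) (hc0 : v' c = 0) : c = (a + b) / 2 := by
  have hrefl : ∀ x ∈ Icc a b, 2 * c - x ∈ Icc a b → v x = v (2 * c - x) :=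
    fun _ hx ↦ hv.eq_comp_const_sub_of_deriv_eq_zero hh hvS hcont hc hc0 hx
  obtain ⟨ha, hb⟩ := hc
  by_contra hmid
  rcases lt_or_gt_of_ne hmid with hlt | hgt
  · exact hne (2 * c - a) ⟨by linarith, by linarith⟩
      (hrefl a (left_mem_Icc.2 (by linarith)) ⟨by linarith, by linarith⟩).symm
  · refine hne (2 * c - b) ⟨by linarith, by linarith⟩ ?_
    rw [hab, hrefl b (right_mem_Icc.2 (by linarith)) ⟨by linarith, by linarith⟩]

end SolvesOn

/-- Symmetry of the phase-field profile: a non-constant C² solution of `v'' = h(v)` on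
`[0,L]` with values in `(0,1]`, `v(0) = v(L) = 1`, `h` locally Lipschitz on `(0,∞)` and
`h(1) = 0`, is a symmetric well: its unique interior critical point is `L/2`, a global
minimum, `v` is strictly decreasing on `[0,L/2]`, strictly increasing on `[L/2,L]`, and
`v(x) = v(L-x)`. -/
theorem stmt11 (L : ℝ) (hL : 0 < L) (h : ℝ → ℝ)
    (hlip : ∀ s : ℝ, 0 < s → ∃ (K : NNReal) (U : Set ℝ), U ∈ nhds s ∧ LipschitzOnWith K h U)
    (hh1 : h 1 = 0)
    (v v' : ℝ → ℝ)
    (hv : ∀ x ∈ Icc (0:ℝ) L, HasDerivWithinAt v (v' x) (Icc 0 L) x)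
    (hv' : ∀ x ∈ Icc (0:ℝ) L, HasDerivWithinAt v' (h (v x)) (Icc 0 L) x)
    (hrange : ∀ x ∈ Icc (0:ℝ) L, v x ∈ Ioc (0:ℝ) 1)
    (hv0 : v 0 = 1) (hvL : v L = 1)
    (hnot : ¬ ∀ x ∈ Icc (0:ℝ) L, v x = 1) :
    (∀ x ∈ Ioo (0:ℝ) L, v' x = 0 → x = L / 2) ∧
    v' (L / 2) = 0 ∧
    (∀ x ∈ Icc (0:ℝ) L, v (L / 2) ≤ v x) ∧
    StrictAntiOn v (Icc 0 (L / 2)) ∧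
    StrictMonoOn v (Icc (L / 2) L) ∧
    (∀ x ∈ Icc (0:ℝ) L, v x = v (L - x)) := by
  have hh : LocallyLipschitzOn (Ioi 0) h := fun s hs ↦ by
    obtain ⟨K, U, hU, hKU⟩ := hlip s hs
    exact ⟨K, U, mem_nhdsWithin_of_mem_nhds hU, hKU⟩
  have hsol : SolvesOn h (Ioo 0 L) v v' := solvesOn_Ioo_of_hasDerivWithinAt_Icc hv hv'
  have hcont : ContinuousOn v (Icc 0 L) := fun x hx ↦ (hv x hx).continuousWithinAt
  have hpos : MapsTo v (Ioo 0 L) (Ioi 0) := fun x hx ↦ (hrange x (Ioo_subset_Icc_self hx)).1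
  obtain ⟨x₀, hx₀, hx₀1⟩ : ∃ x ∈ Ioo 0 L, v x ≠ 1 := by
    by_contra! hall
    exact hnot fun x hx ↦ by
      rcases eq_endpoints_or_mem_Ioo_of_mem_Icc hx with rfl | rfl | hx <;> simp_all
  have hlt : ∀ x ∈ Ioo 0 L, v x < 1 := fun x ↦ hsol.lt_of_le_of_exists_ne hh isOpen_Ioo
    isPreconnected_Ioo hpos hh1 (fun y hy ↦ (hrange y (Ioo_subset_Icc_self hy)).2) ⟨x₀, hx₀, hx₀1⟩
  have hcrit : ∀ x ∈ Ioo 0 L, v' x = 0 → x = L / 2 := fun x hx hx0 ↦ by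
    simpa using hsol.eq_midpoint_of_deriv_eq_zero hh hpos hcont (hv0.trans hvL.symm)
      (fun y hy ↦ hv0 ▸ (hlt y hy).ne) hx hx0
  obtain ⟨m, hm, hmin⟩ : ∃ m ∈ Ioo 0 L, IsMinOn v (Icc 0 L) m := by
    refine isCompact_Icc.exists_isMinOn_mem_subset hcont (Ioo_subset_Icc_self hx₀) ?_
    rw [Icc_sdiff_Ioo_same hL.le]
    rintro _ (rfl | rfl) <;> simpa [hv0, hvL] using hlt x₀ hx₀
  have hm0 : v' m = 0 :=
    (hmin.isLocalMin (Icc_mem_nhds hm.1 hm.2)).hasDerivAt_eq_zero (hsol m hm).1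
  obtain rfl : m = L / 2 := hcrit m hm hm0
  have hmonotone : ∀ a b, 0 ≤ a → b ≤ L → L / 2 ∉ Ioo a b →
      StrictMonoOn v (Icc a b) ∨ StrictAntiOn v (Icc a b) := fun a b ha hb hmid ↦
    strictMonoOn_or_strictAntiOn_Icc_of_hasDerivAt_ne_zero (hcont.mono (Icc_subset_Icc ha hb))
      (fun x hx ↦ (hsol x (Ioo_subset_Ioo ha hb hx)).1)
      fun x hx hx0 ↦ hmid (hcrit x (Ioo_subset_Ioo ha hb hx) hx0 ▸ hx)
  refine ⟨hcrit, hm0, hmin, ?_, ?_, fun x hx ↦ ?_⟩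
  · refine (hmonotone 0 (L / 2) le_rfl hm.2.le fun hx ↦ hx.2.false).resolve_left fun hmono ↦ ?_
    linarith [hmono (left_mem_Icc.2 hm.1.le) (right_mem_Icc.2 hm.1.le) hm.1, hlt _ hm]
  · refine (hmonotone (L / 2) L hm.1.le le_rfl fun hx ↦ hx.1.false).resolve_right fun hanti ↦ ?_
    linarith [hanti (left_mem_Icc.2 hm.2.le) (right_mem_Icc.2 hm.2.le) hm.2, hlt _ hm]
  · simpa [mul_div_cancel₀] using hsol.eq_comp_const_sub_of_deriv_eq_zero hh hpos hcont hm hm0 hx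
      ⟨by linarith [hx.2], by linarith [hx.1]⟩
end

section
/- For f(t) = t/(1-t) on [0,1), the map s(m) := 2(1-m)f(m) ∫_m^1 dt/(f(t)√((1-t)²f(t)² - (1-m)²f(m)²)) evaluates, for m ∈ (0,1), to s(m) = 2 arctan(√(1-m²)/m) - 2m log((1+√(1-m²))/m). -/
/-!
Since `(1 - t) f(t) = t`, the prefactor is `2m` and the integrand is
`(1 - t) / (t √(t² - m²)) = 1 / (t √(t² - m²)) - 1 / √(t² - m²)`, whose primitives are
`m⁻¹ arctan (√(t² - m²) / m)` and `log (t + √(t² - m²))`. The integrand is nonnegative on `(m, 1)`,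
so the improper integral at `t = m` is absolutely convergent and the fundamental theorem of
calculus applies.
-/

open Set Filter MeasureTheory

open Real

lemma hasDerivAt_sqrt_sq_sub_sq {m x : ℝ} (hmx : m ^ 2 < x ^ 2) :
    HasDerivAt (fun t => √(t ^ 2 - m ^ 2)) (x / √(x ^ 2 - m ^ 2)) x := by
  have hpos : 0 < x ^ 2 - m ^ 2 := sub_pos.mpr hmx
  convert (((hasDerivAt_pow 2 x).sub_const (m ^ 2)).sqrt hpos.ne') using 1
  field_simp
  ring

lemma hasDerivAt_arctan_sqrt_sq_sub_sq_div {m x : ℝ} (hm : m ≠ 0) (hx : x ≠ 0)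
    (hmx : m ^ 2 < x ^ 2) :
    HasDerivAt (fun t => arctan (√(t ^ 2 - m ^ 2) / m)) (m / (x * √(x ^ 2 - m ^ 2))) x := by
  have hu : 0 < √(x ^ 2 - m ^ 2) := sqrt_pos.mpr (sub_pos.mpr hmx)
  have hu2 : √(x ^ 2 - m ^ 2) ^ 2 = x ^ 2 - m ^ 2 := sq_sqrt (sub_pos.mpr hmx).le
  convert ((hasDerivAt_sqrt_sq_sub_sq hmx).div_const m).arctan using 1
  field_simp
  rw [hu2]
  ring

lemma hasDerivAt_log_add_sqrt_sq_sub_sq {m x : ℝ} (hx : 0 < x) (hmx : m ^ 2 < x ^ 2) :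
    HasDerivAt (fun t => log (t + √(t ^ 2 - m ^ 2))) (1 / √(x ^ 2 - m ^ 2)) x := by
  have hu : 0 < √(x ^ 2 - m ^ 2) := sqrt_pos.mpr (sub_pos.mpr hmx)
  have hsum : x + √(x ^ 2 - m ^ 2) ≠ 0 := by positivity
  have hd : HasDerivAt (fun t => t + √(t ^ 2 - m ^ 2)) (1 + x / √(x ^ 2 - m ^ 2)) x :=
    (hasDerivAt_id' x).add (hasDerivAt_sqrt_sq_sub_sq hmx)
  convert hd.log hsum using 1
  field_simp
  ring

lemma hasDerivAt_inv_mul_arctan_sub_log {m x : ℝ} (hm : 0 < m) (hmx : m < x) :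
    HasDerivAt (fun t => m⁻¹ * arctan (√(t ^ 2 - m ^ 2) / m) - log (t + √(t ^ 2 - m ^ 2)))
      ((1 - x) / (x * √(x ^ 2 - m ^ 2))) x := by
  have hx : 0 < x := hm.trans hmx
  have hmx2 : m ^ 2 < x ^ 2 := by gcongr
  have hu : 0 < √(x ^ 2 - m ^ 2) := sqrt_pos.mpr (sub_pos.mpr hmx2)
  have hd : HasDerivAt (fun t => m⁻¹ * arctan (√(t ^ 2 - m ^ 2) / m) - log (t + √(t ^ 2 - m ^ 2)))
      (m⁻¹ * (m / (x * √(x ^ 2 - m ^ 2))) - 1 / √(x ^ 2 - m ^ 2)) x :=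
    ((hasDerivAt_arctan_sqrt_sq_sub_sq_div hm.ne' hx.ne' hmx2).const_mul m⁻¹).sub
      (hasDerivAt_log_add_sqrt_sq_sub_sq hx hmx2)
  convert hd using 1
  field_simp

lemma integral_Ioo_one_sub_div_mul_sqrt_sq_sub_sq {m : ℝ} (hm0 : 0 < m) (hm1 : m < 1) :
    ∫ t in Ioo m 1, (1 - t) / (t * √(t ^ 2 - m ^ 2)) =
      m⁻¹ * arctan (√(1 - m ^ 2) / m) - log (1 + √(1 - m ^ 2)) + log m := by
  have hcont : ContinuousOn
      (fun t => m⁻¹ * arctan (√(t ^ 2 - m ^ 2) / m) - log (t + √(t ^ 2 - m ^ 2))) (Icc m 1) := by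
    refine ContinuousOn.sub (by fun_prop) (ContinuousOn.log (by fun_prop) fun t ht => ?_)
    have : 0 < t := hm0.trans_le ht.1
    positivity
  have hderiv := fun x (hx : x ∈ Ioo m 1) => hasDerivAt_inv_mul_arctan_sub_log hm0 hx.1
  have hnonneg : ∀ x ∈ Ioo m 1, 0 ≤ (1 - x) / (x * √(x ^ 2 - m ^ 2)) := fun x hx =>
    div_nonneg (sub_nonneg.mpr hx.2.le) (mul_nonneg (hm0.trans hx.1).le (sqrt_nonneg _))
  have hint := (intervalIntegrable_iff_integrableOn_Ioc_of_le hm1.le).mpr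
    (intervalIntegral.integrableOn_deriv_of_nonneg hcont hderiv hnonneg)
  rw [← integral_Ioc_eq_integral_Ioo, ← intervalIntegral.integral_of_le hm1.le,
    intervalIntegral.integral_eq_sub_of_hasDerivAt_of_le hm1.le hcont hderiv hint]
  simp

/-- For the prototype `f(t) = t/(1-t)`, the map
`s(m) = 2(1-m)f(m) ∫_m^1 dt/(f(t)√((1-t)²f(t)² - (1-m)²f(m)²))` evaluates to
`s(m) = 2 arctan(√(1-m²)/m) - 2m log((1+√(1-m²))/m)` for `m ∈ (0,1)`. -/
theorem stmt15 (m : ℝ) (hm : m ∈ Ioo (0:ℝ) 1)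
    (f : ℝ → ℝ) (hf : ∀ t, f t = t / (1 - t)) :
    2 * (1 - m) * f m *
      ∫ t in Ioo m 1,
        1 / (f t * Real.sqrt ((1 - t) ^ 2 * (f t) ^ 2 - (1 - m) ^ 2 * (f m) ^ 2)) =
    2 * Real.arctan (Real.sqrt (1 - m ^ 2) / m) -
      2 * m * Real.log ((1 + Real.sqrt (1 - m ^ 2)) / m) := by
  obtain ⟨hm0, hm1⟩ := hm
  have hscaled : ∀ t, t ≠ 1 → (1 - t) * f t = t := fun t ht =>
    hf t ▸ mul_div_cancel₀ t (sub_ne_zero.mpr ht.symm)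
  have hintegrand : EqOn
      (fun t => 1 / (f t * √((1 - t) ^ 2 * (f t) ^ 2 - (1 - m) ^ 2 * (f m) ^ 2)))
      (fun t => (1 - t) / (t * √(t ^ 2 - m ^ 2))) (Ioo m 1) := fun t ht => by
    simp only [← mul_pow, hscaled t ht.2.ne, hscaled m hm1.ne]
    rw [hf t]
    field_simp
  rw [setIntegral_congr_fun measurableSet_Ioo hintegrand,
    integral_Ioo_one_sub_div_mul_sqrt_sq_sub_sq hm0 hm1, mul_assoc 2, hscaled m hm1.ne,
    log_div (by positivity) hm0.ne']
  field_simp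
  ring
end

section
/- For f(t) = t/(1-t) on [0,1) and m ∈ (0,1), the integral 2∫_m^1 (1-t)²f(t)/√((1-t)²f(t)² - (1-m)²f(m)²) dt equals m² log(m/(√(1-m²)+1)) + √(1-m²). -/
/-!
On `(m, 1)` the integrand collapses to `t (1 - t) / √(t² - m²)`, and twice this has the
explicit antiderivative `(2 - t) √(t² - m²) - m² log (t + √(t² - m²))`, which is continuous up to
`t = m`. Being nonnegative, the derivative is automatically integrable, so the fundamental theorem of
calculus evaluates the improper integral at the endpoints.
-/

open Set MeasureTheory

namespace PrototypeIntegral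

lemma one_sub_sq_mul_div_one_sub_sq {x : ℝ} (hx : x ≠ 1) :
    (1 - x) ^ 2 * (x / (1 - x)) ^ 2 = x ^ 2 := by
  have : 1 - x ≠ 0 := sub_ne_zero.2 hx.symm
  field_simp

lemma integrand_eq {m t : ℝ} (hm : m ≠ 1) (ht : t ≠ 1) :
    (1 - t) ^ 2 * (t / (1 - t)) /
        Real.sqrt ((1 - t) ^ 2 * (t / (1 - t)) ^ 2 - (1 - m) ^ 2 * (m / (1 - m)) ^ 2) =
      t * (1 - t) / Real.sqrt (t ^ 2 - m ^ 2) := by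
  have : 1 - t ≠ 0 := sub_ne_zero.2 ht.symm
  rw [one_sub_sq_mul_div_one_sub_sq hm, one_sub_sq_mul_div_one_sub_sq ht]
  congr 1
  field_simp

noncomputable def antideriv (m t : ℝ) : ℝ :=
  (2 - t) * Real.sqrt (t ^ 2 - m ^ 2) - m ^ 2 * Real.log (t + Real.sqrt (t ^ 2 - m ^ 2))

lemma hasDerivAt_antideriv {m t : ℝ} (ht : |m| < t) :
    HasDerivAt (antideriv m) (2 * (t * (1 - t) / Real.sqrt (t ^ 2 - m ^ 2))) t := by
  have hpos : 0 < t ^ 2 - m ^ 2 := by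
    rw [sub_pos, sq_lt_sq, abs_of_pos ((abs_nonneg m).trans_lt ht)]
    exact ht
  set A := Real.sqrt (t ^ 2 - m ^ 2) with hA
  have hA0 : 0 < A := Real.sqrt_pos.2 hpos
  have hA2 : A ^ 2 = t ^ 2 - m ^ 2 := Real.sq_sqrt hpos.le
  have htA : 0 < t + A := add_pos ((abs_nonneg m).trans_lt ht) hA0
  have hsqrt : HasDerivAt (fun t : ℝ => Real.sqrt (t ^ 2 - m ^ 2)) (t / A) t := by
    convert ((hasDerivAt_pow 2 t).sub_const (m ^ 2)).sqrt hpos.ne' using 1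
    field_simp
    ring
  have hlog : HasDerivAt (fun t : ℝ => Real.log (t + Real.sqrt (t ^ 2 - m ^ 2))) (1 / A) t := by
    have hadd : HasDerivAt (fun t : ℝ => t + Real.sqrt (t ^ 2 - m ^ 2)) (1 + t / A) t :=
      (hasDerivAt_id t).add hsqrt
    convert hadd.log htA.ne' using 1
    rw [← hA]
    field_simp
    ring
  refine (((hasDerivAt_id' t).const_sub 2).mul hsqrt |>.sub (hlog.const_mul (m ^ 2))).congr_deriv ?_
  rw [← hA]
  field_simp
  linear_combination -hA2

lemma continuousOn_antideriv {m : ℝ} (hm : 0 < m) : ContinuousOn (antideriv m) (Ici m) := by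
  have hsqrt : Continuous fun t : ℝ => Real.sqrt (t ^ 2 - m ^ 2) := by fun_prop
  refine ((continuous_const.sub continuous_id).mul hsqrt).continuousOn.sub
    (continuousOn_const.mul ((continuous_id.add hsqrt).continuousOn.log fun t ht => ?_))
  exact (add_pos_of_pos_of_nonneg (hm.trans_le ht) (Real.sqrt_nonneg _)).ne'

lemma integral_eq_antideriv_sub {m b : ℝ} (hm : 0 < m) (hmb : m ≤ b) (hb : b ≤ 1) :
    2 * ∫ t in m..b, t * (1 - t) / Real.sqrt (t ^ 2 - m ^ 2) = antideriv m b - antideriv m m := by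
  have hcont : ContinuousOn (antideriv m) (Icc m b) :=
    (continuousOn_antideriv hm).mono Icc_subset_Ici_self
  have hderiv : ∀ t ∈ Ioo m b,
      HasDerivAt (antideriv m) (2 * (t * (1 - t) / Real.sqrt (t ^ 2 - m ^ 2))) t :=
    fun t ht => hasDerivAt_antideriv ((abs_of_pos hm).trans_lt ht.1)
  have hnonneg : ∀ t ∈ Ioo m b, 0 ≤ 2 * (t * (1 - t) / Real.sqrt (t ^ 2 - m ^ 2)) :=
    fun t ht => mul_nonneg zero_le_two <| div_nonneg
      (mul_nonneg (hm.trans ht.1).le (sub_nonneg.2 (ht.2.trans_le hb).le)) (Real.sqrt_nonneg _)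
  have hint := (intervalIntegrable_iff_integrableOn_Ioc_of_le hmb).2
    (intervalIntegral.integrableOn_deriv_of_nonneg hcont hderiv hnonneg)
  rw [← intervalIntegral.integral_const_mul]
  exact intervalIntegral.integral_eq_sub_of_hasDerivAt_of_le hmb hcont hderiv hint

lemma antideriv_one_sub_antideriv_self {m : ℝ} (hm : 0 < m) :
    antideriv m 1 - antideriv m m =
      m ^ 2 * Real.log (m / (Real.sqrt (1 - m ^ 2) + 1)) + Real.sqrt (1 - m ^ 2) := by
  have hden : Real.sqrt (1 - m ^ 2) + 1 ≠ 0 := by positivity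
  rw [Real.log_div hm.ne' hden, add_comm _ 1]
  simp only [antideriv, one_pow, sub_self, Real.sqrt_zero, mul_zero, add_zero]
  ring

end PrototypeIntegral

open PrototypeIntegral in
/-- For the prototype `f(t) = t/(1-t)` and `m ∈ (0,1)`,
`2∫_m^1 (1-t)²f(t)/√((1-t)²f(t)² - (1-m)²f(m)²) dt
  = m² log(m/(√(1-m²)+1)) + √(1-m²)`. -/
theorem stmt16 (m : ℝ) (hm : m ∈ Ioo (0:ℝ) 1)
    (f : ℝ → ℝ) (hf : ∀ t, f t = t / (1 - t)) :
    2 * ∫ t in Ioo m 1,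
        (1 - t) ^ 2 * f t /
          Real.sqrt ((1 - t) ^ 2 * (f t) ^ 2 - (1 - m) ^ 2 * (f m) ^ 2) =
    m ^ 2 * Real.log (m / (Real.sqrt (1 - m ^ 2) + 1)) + Real.sqrt (1 - m ^ 2) := by
  obtain ⟨hm0, hm1⟩ := hm
  have hsimp : EqOn (fun t => (1 - t) ^ 2 * f t /
        Real.sqrt ((1 - t) ^ 2 * (f t) ^ 2 - (1 - m) ^ 2 * (f m) ^ 2))
      (fun t => t * (1 - t) / Real.sqrt (t ^ 2 - m ^ 2)) (Ioo m 1) := fun t ht => by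
    simp only [hf]
    exact integrand_eq hm1.ne ht.2.ne
  rw [setIntegral_congr_fun measurableSet_Ioo hsimp, ← integral_Ioc_eq_integral_Ioo,
    ← intervalIntegral.integral_of_le hm1.le, integral_eq_antideriv_sub hm0 hm1.le le_rfl]
  exact antideriv_one_sub_antideriv_self hm0
end
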